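/- arXiv:1702.03656 — 8 statements merged into one kernel-verified Lean document; each statement's English description precedes it below -/
import Mathlib

section
/- Let b : ℝ → (0,∞) be smooth, let p be a smooth, strictly positive probability density on ℝ that decays rapidly at infinity together with its derivatives, and let h : ℝ → ℝ be smooth and bounded with ∫_ℝ p(x)h(x) dx = 0. Set v = p·h. Then the directional derivative of the generalized Fisher information at p in direction v is lim_{δ→0} (J_b(p + δv) − J_b(p))/δ = ∫_ℝ h(x) ( b(x) p′(x)²/p(x) − 2 (b p′)′(x) ) dx; equivalently, the gradient of J_b at p is ∇J_b(p) = b (p′/p)² − 2 (b p′)′/p. -/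
open MeasureTheory Real Filter

section AuxiliaryLemmas
open Set

lemma aux_top (b p : ℝ → ℝ) (hb_pos : ∀ x, 0 < b x) (hp_pos : ∀ x, 0 < p x)
    (cp : Continuous p) (cp' : Continuous (deriv p)) (cb : Continuous b)
    (hdp : Differentiable ℝ p)
    (hp0 : Tendsto p atTop (nhds 0))
    (hJ : Integrable (fun x => b x * (deriv p x)^2 / p x))
    (K a : ℝ) (hK : 0 < K) (hge : ∀ x, a ≤ x → K ≤ |b x * deriv p x|) : False := by
  set F0 : ℝ → ℝ := fun x => b x * (deriv p x)^2 / p x with hF0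
  have hpne : ∀ x, p x ≠ 0 := fun x => (hp_pos x).ne'
  have hF0cont : Continuous F0 := ((cb.mul (cp'.pow 2)).div cp hpne)
  have hF0nn : ∀ x, 0 ≤ F0 x := fun x =>
    div_nonneg (mul_nonneg (hb_pos x).le (sq_nonneg _)) (hp_pos x).le
  set M := ∫ x in Ioi a, F0 x with hMdef
  have hM : ∀ R, a ≤ R → ∫ x in a..R, F0 x ≤ M := by
    intro R hR
    rw [intervalIntegral.integral_of_le hR]
    exact setIntegral_mono_set hJ.integrableOn (ae_of_all _ hF0nn)
      (HasSubset.Subset.eventuallyLE Ioc_subset_Ioi_self)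
  have hlog : ∀ R, a ≤ R → K * (log (p a) - log (p R)) ≤ ∫ x in a..R, F0 x := by
    intro R hR
    have hFTC : ∫ x in a..R, deriv p x / p x = log (p R) - log (p a) := by
      apply intervalIntegral.integral_eq_sub_of_hasDerivAt
      · exact fun x _ => ((hdp x).hasDerivAt).log (hpne x)
      · exact ((cp'.div cp hpne)).intervalIntegrable a R
    have h1 : ∫ x in a..R, (-K) * (deriv p x / p x) = K * (log (p a) - log (p R)) := by
      rw [intervalIntegral.integral_const_mul, hFTC]; ring
    rw [← h1]
    apply intervalIntegral.integral_mono_on hR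
      ((continuous_const.mul (cp'.div cp hpne)).intervalIntegrable a R)
      (hF0cont.intervalIntegrable a R)
    intro x hx
    have hKx := hge x hx.1
    have e1 : |b x * deriv p x| * |deriv p x| = b x * (deriv p x)^2 := by
      rw [abs_mul, abs_of_pos (hb_pos x), mul_assoc, abs_mul_abs_self]; ring
    have e2 : K * |deriv p x| ≤ b x * (deriv p x)^2 := by
      rw [← e1]; exact mul_le_mul_of_nonneg_right hKx (abs_nonneg _)
    have e3 : -K * deriv p x ≤ K * |deriv p x| := by
      have := neg_abs_le (deriv p x)
      nlinarith [le_abs_self (deriv p x)]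
    calc (-K) * (deriv p x / p x) = (-K * deriv p x) / p x := by ring
      _ ≤ (b x * (deriv p x)^2) / p x :=
          (div_le_div_iff_of_pos_right (hp_pos x)).mpr (e3.trans e2)
      _ = F0 x := rfl
  -- log (p R) stays bounded below, contradiction with p → 0
  have hlogbot : Tendsto (fun R => log (p R)) atTop atBot := by
    apply Real.tendsto_log_nhdsNE_zero.comp
    rw [tendsto_nhdsWithin_iff]
    exact ⟨hp0, Eventually.of_forall fun x => hpne x⟩
  have hbdd : ∀ R, a ≤ R → log (p a) - M / K ≤ log (p R) := by
    intro R hR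
    have h4 := (hlog R hR).trans (hM R hR)
    have h5 : log (p a) - log (p R) ≤ M / K := (le_div_iff₀ hK).mpr (by linarith)
    linarith
  obtain ⟨R, hR1, hR2⟩ := ((hlogbot.eventually (eventually_lt_atBot (log (p a) - M / K))).and
    (eventually_ge_atTop a)).exists
  exact absurd (hbdd R hR2) (not_le.mpr hR1)

lemma aux_bot (b p : ℝ → ℝ) (hb_pos : ∀ x, 0 < b x) (hp_pos : ∀ x, 0 < p x)
    (cp : Continuous p) (cp' : Continuous (deriv p)) (cb : Continuous b)
    (hdp : Differentiable ℝ p)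
    (hp0 : Tendsto p atBot (nhds 0))
    (hJ : Integrable (fun x => b x * (deriv p x)^2 / p x))
    (K a : ℝ) (hK : 0 < K) (hge : ∀ x, x ≤ a → K ≤ |b x * deriv p x|) : False := by
  set F0 : ℝ → ℝ := fun x => b x * (deriv p x)^2 / p x with hF0
  have hpne : ∀ x, p x ≠ 0 := fun x => (hp_pos x).ne'
  have hF0cont : Continuous F0 := ((cb.mul (cp'.pow 2)).div cp hpne)
  have hF0nn : ∀ x, 0 ≤ F0 x := fun x =>
    div_nonneg (mul_nonneg (hb_pos x).le (sq_nonneg _)) (hp_pos x).le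
  set M := ∫ x in Iic a, F0 x with hMdef
  have hM : ∀ R, R ≤ a → ∫ x in R..a, F0 x ≤ M := by
    intro R hR
    rw [intervalIntegral.integral_of_le hR]
    exact setIntegral_mono_set hJ.integrableOn (ae_of_all _ hF0nn)
      (HasSubset.Subset.eventuallyLE Ioc_subset_Iic_self)
  have hlog : ∀ R, R ≤ a → K * (log (p a) - log (p R)) ≤ ∫ x in R..a, F0 x := by
    intro R hR
    have hFTC : ∫ x in R..a, deriv p x / p x = log (p a) - log (p R) := by
      apply intervalIntegral.integral_eq_sub_of_hasDerivAt
      · exact fun x _ => ((hdp x).hasDerivAt).log (hpne x)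
      · exact ((cp'.div cp hpne)).intervalIntegrable R a
    have h1 : ∫ x in R..a, K * (deriv p x / p x) = K * (log (p a) - log (p R)) := by
      rw [intervalIntegral.integral_const_mul, hFTC]
    rw [← h1]
    apply intervalIntegral.integral_mono_on hR
      ((continuous_const.mul (cp'.div cp hpne)).intervalIntegrable R a)
      (hF0cont.intervalIntegrable R a)
    intro x hx
    have hKx := hge x hx.2
    have e1 : |b x * deriv p x| * |deriv p x| = b x * (deriv p x)^2 := by
      rw [abs_mul, abs_of_pos (hb_pos x), mul_assoc, abs_mul_abs_self]; ring
    have e2 : K * |deriv p x| ≤ b x * (deriv p x)^2 := by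
      rw [← e1]; exact mul_le_mul_of_nonneg_right hKx (abs_nonneg _)
    have e3 : K * deriv p x ≤ K * |deriv p x| :=
      mul_le_mul_of_nonneg_left (le_abs_self _) hK.le
    calc K * (deriv p x / p x) = (K * deriv p x) / p x := by ring
      _ ≤ (b x * (deriv p x)^2) / p x :=
          (div_le_div_iff_of_pos_right (hp_pos x)).mpr (e3.trans e2)
      _ = F0 x := rfl
  have hlogbot : Tendsto (fun R => log (p R)) atBot atBot := by
    apply Real.tendsto_log_nhdsNE_zero.comp
    rw [tendsto_nhdsWithin_iff]
    exact ⟨hp0, Eventually.of_forall fun x => hpne x⟩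
  have hbdd : ∀ R, R ≤ a → log (p a) - M / K ≤ log (p R) := by
    intro R hR
    have h4 := (hlog R hR).trans (hM R hR)
    have h5 : log (p a) - log (p R) ≤ M / K := (le_div_iff₀ hK).mpr (by linarith)
    linarith
  obtain ⟨R, hR1, hR2⟩ := ((hlogbot.eventually (eventually_lt_atBot (log (p a) - M / K))).and
    (eventually_le_atBot a)).exists
  exact absurd (hbdd R hR2) (not_le.mpr hR1)

lemma integral_deriv_bph_eq_zero (b p h : ℝ → ℝ)
    (hb_pos : ∀ x, 0 < b x) (hp_pos : ∀ x, 0 < p x)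
    (cp : Continuous p) (cp' : Continuous (deriv p)) (cb : Continuous b)
    (hdp : Differentiable ℝ p)
    (hp0top : Tendsto p atTop (nhds 0)) (hp0bot : Tendsto p atBot (nhds 0))
    (hJ : Integrable (fun x => b x * (deriv p x)^2 / p x))
    (C1 : ℝ) (hC1pos : 0 < C1) (hC1 : ∀ x, |h x| ≤ C1)
    (gd : ℝ → ℝ)
    (hderiv : ∀ x, HasDerivAt (fun y => b y * deriv p y * h y) (gd x) x)
    (hgd : Integrable gd) : ∫ x, gd x = 0 := by
  set g : ℝ → ℝ := fun y => b y * deriv p y * h y with hg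
  have htop : Tendsto g atTop (nhds (limUnder atTop g)) :=
    tendsto_limUnder_of_hasDerivAt_of_integrableOn_Ioi (a := 0)
      (fun x _ => hderiv x) hgd.integrableOn
  have hbot : Tendsto g atBot (nhds (limUnder atBot g)) :=
    tendsto_limUnder_of_hasDerivAt_of_integrableOn_Iic (a := 0)
      (fun x _ => hderiv x) hgd.integrableOn
  have hint : ∫ x, gd x = limUnder atTop g - limUnder atBot g :=
    integral_of_hasDerivAt_of_tendsto hderiv hgd hbot htop
  have key : ∀ (l : ℝ), (∀ᶠ x in atTop, |g x - l| < |l| / 2) → l ≠ 0 → False := by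
    intro l hev hl
    have hlpos : 0 < |l| := abs_pos.mpr hl
    obtain ⟨a, ha⟩ := eventually_atTop.mp hev
    refine aux_top b p hb_pos hp_pos cp cp' cb hdp hp0top hJ (|l| / (2 * C1)) a
      (by positivity) ?_
    intro x hx
    have h1 : |l| / 2 ≤ |g x| := by
      have h5 := abs_sub_abs_le_abs_sub l (g x)
      rw [abs_sub_comm] at h5
      linarith [ha x hx]
    have h3 : |g x| = |b x * deriv p x| * |h x| := by rw [hg]; simp [abs_mul, mul_assoc]
    have h4 : |g x| ≤ |b x * deriv p x| * C1 :=
      h3.le.trans (mul_le_mul_of_nonneg_left (hC1 x) (abs_nonneg _))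
    rw [div_le_iff₀ (by positivity : (0:ℝ) < 2 * C1)]
    calc |l| ≤ 2 * |g x| := by linarith
      _ ≤ 2 * (|b x * deriv p x| * C1) := by linarith
      _ = |b x * deriv p x| * (2 * C1) := by ring
  have keybot : ∀ (l : ℝ), (∀ᶠ x in atBot, |g x - l| < |l| / 2) → l ≠ 0 → False := by
    intro l hev hl
    have hlpos : 0 < |l| := abs_pos.mpr hl
    obtain ⟨a, ha⟩ := eventually_atBot.mp hev
    refine aux_bot b p hb_pos hp_pos cp cp' cb hdp hp0bot hJ (|l| / (2 * C1)) a
      (by positivity) ?_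
    intro x hx
    have h1 : |l| / 2 ≤ |g x| := by
      have h5 := abs_sub_abs_le_abs_sub l (g x)
      rw [abs_sub_comm] at h5
      linarith [ha x hx]
    have h3 : |g x| = |b x * deriv p x| * |h x| := by rw [hg]; simp [abs_mul, mul_assoc]
    have h4 : |g x| ≤ |b x * deriv p x| * C1 :=
      h3.le.trans (mul_le_mul_of_nonneg_left (hC1 x) (abs_nonneg _))
    rw [div_le_iff₀ (by positivity : (0:ℝ) < 2 * C1)]
    calc |l| ≤ 2 * |g x| := by linarith
      _ ≤ 2 * (|b x * deriv p x| * C1) := by linarith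
      _ = |b x * deriv p x| * (2 * C1) := by ring
  have hn : limUnder atTop g = 0 := by
    by_contra hn
    refine key (limUnder atTop g) ?_ hn
    have := htop.eventually (Metric.ball_mem_nhds (limUnder atTop g)
      (half_pos (abs_pos.mpr hn)))
    filter_upwards [this] with x hx
    simpa [Real.dist_eq] using hx
  have hm : limUnder atBot g = 0 := by
    by_contra hm
    refine keybot (limUnder atBot g) ?_ hm
    have := hbot.eventually (Metric.ball_mem_nhds (limUnder atBot g)
      (half_pos (abs_pos.mpr hm)))
    filter_upwards [this] with x hx
    simpa [Real.dist_eq] using hx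
  rw [hint, hn, hm, sub_zero]

end AuxiliaryLemmas

/-- Generalized Fisher information `J_b(p) = ∫ b(x) p'(x)² / p(x) dx`. -/
noncomputable def fisherInfo (b f : ℝ → ℝ) : ℝ := ∫ x, b x * (deriv f x) ^ 2 / f x

set_option maxHeartbeats 1000000 in
/-- **Gradient of the generalized Fisher information** (Lemma: `∇J_b(p) = b p'²/p² - 2(bp')'/p`).
For a smooth positive weight `b`, a smooth strictly positive rapidly decreasing probability
density `p`, and a smooth bounded `h` with `∫ p h = 0`, setting `v = p h`, the directional
derivative of `J_b` at `p` in direction `v` equals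
`∫ h (b p'²/p - 2 (b p')')`. -/
theorem fisherInfo_gradient
    (b : ℝ → ℝ) (hb_smooth : ContDiff ℝ (⊤ : ℕ∞) b) (hb_pos : ∀ x, 0 < b x)
    (p : ℝ → ℝ) (hp_smooth : ContDiff ℝ (⊤ : ℕ∞) p) (hp_pos : ∀ x, 0 < p x)
    (hp_int : Integrable p) (hp_density : ∫ x, p x = 1)
    -- `p` decays rapidly at infinity together with all its derivatives
    (hp_decay_top : ∀ n k : ℕ, Tendsto (fun x => x ^ n * iteratedDeriv k p x) atTop (nhds 0))
    (hp_decay_bot : ∀ n k : ℕ, Tendsto (fun x => x ^ n * iteratedDeriv k p x) atBot (nhds 0))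
    (h : ℝ → ℝ) (hh_smooth : ContDiff ℝ (⊤ : ℕ∞) h) (hh_bdd : ∃ C, ∀ x, |h x| ≤ C)
    (hh_orth : ∫ x, p x * h x = 0)
    -- all integrals appearing are finite
    (hJ_int : Integrable (fun x => b x * (deriv p x) ^ 2 / p x))
    (hgrad_int : Integrable (fun x =>
      h x * (b x * (deriv p x) ^ 2 / p x - 2 * deriv (fun y => b y * deriv p y) x)))
    (hJpert_int : ∃ ε > 0, ∀ δ : ℝ, |δ| < ε → Integrable (fun x =>
      b x * (deriv (fun y => p y + δ * (p y * h y)) x) ^ 2 / (p x + δ * (p x * h x)))) :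
    Tendsto
      (fun δ : ℝ =>
        (fisherInfo b (fun x => p x + δ * (p x * h x)) - fisherInfo b p) / δ)
      (nhdsWithin 0 {(0 : ℝ)}ᶜ)
      (nhds (∫ x, h x *
        (b x * (deriv p x) ^ 2 / p x - 2 * deriv (fun y => b y * deriv p y) x))) := by
  classical
  obtain ⟨C, hC⟩ := hh_bdd
  obtain ⟨ε, hεpos, hpert⟩ := hJpert_int
  set C1 : ℝ := C + 1 with hC1def
  have hC0 : 0 ≤ C := (abs_nonneg (h 0)).trans (hC 0)
  have hC1pos : 0 < C1 := by rw [hC1def]; linarith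
  have hC1 : ∀ x, |h x| ≤ C1 := fun x => (hC x).trans (by rw [hC1def]; linarith)
  -- regularity facts
  have hdp : Differentiable ℝ p := hp_smooth.differentiable (by simp)
  have hdh : Differentiable ℝ h := hh_smooth.differentiable (by simp)
  have cp : Continuous p := hp_smooth.continuous
  have ch : Continuous h := hh_smooth.continuous
  have cb : Continuous b := hb_smooth.continuous
  have cp' : Continuous (deriv p) := hp_smooth.continuous_deriv (by simp)
  have ch' : Continuous (deriv h) := hh_smooth.continuous_deriv (by simp)
  have hdp' : ContDiff ℝ (⊤ : ℕ∞) (deriv p) :=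
    (contDiff_infty_iff_deriv.mp (hp_smooth.of_le (by simp))).2
  set bp' : ℝ → ℝ := fun y => b y * deriv p y with hbp'def
  have hcbp' : ContDiff ℝ (⊤ : ℕ∞) bp' := (hb_smooth.of_le (by simp)).mul hdp'
  have hdbp' : Differentiable ℝ bp' := hcbp'.differentiable (by simp)
  have cbp'' : Continuous (deriv bp') := hcbp'.continuous_deriv (by exact_mod_cast le_top)
  have hpne : ∀ x, p x ≠ 0 := fun x => (hp_pos x).ne'
  -- abbreviations
  set F0 : ℝ → ℝ := fun x => b x * (deriv p x)^2 / p x with hF0def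
  set L : ℝ → ℝ := fun x => b x * (deriv p x)^2 * h x / p x
      + 2*(b x * deriv p x * deriv h x) with hLdef
  set Q : ℝ → ℝ := fun x => b x * p x * (deriv h x)^2 with hQdef
  have hQnn : ∀ x, 0 ≤ Q x :=
    fun x => mul_nonneg (mul_nonneg (hb_pos x).le (hp_pos x).le) (sq_nonneg _)
  have cQ : Continuous Q := (cb.mul cp).mul (ch'.pow 2)
  -- derivative of perturbed density
  have hderivu : ∀ (δ x : ℝ), deriv (fun y => p y + δ * (p y * h y)) x
      = deriv p x + δ * (deriv p x * h x + p x * deriv h x) := fun δ x =>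
    (((hdp x).hasDerivAt).add
      ((((hdp x).hasDerivAt).mul ((hdh x).hasDerivAt)).const_mul δ)).deriv
  -- denominator bounds
  have hD : ∀ (δ : ℝ), |δ| ≤ 1/(2*C1) → ∀ x,
      1/2 ≤ 1 + δ * h x ∧ 1 + δ * h x ≤ 3/2 := by
    intro δ hδ x
    have h1 : |δ * h x| ≤ 1/2 := by
      rw [abs_mul]
      calc |δ| * |h x| ≤ (1/(2*C1)) * C1 :=
            mul_le_mul hδ (hC1 x) (abs_nonneg _) (by positivity)
        _ = 1/2 := by field_simp; try ring
    have h2 := abs_le.mp h1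
    constructor <;> linarith [h2.1, h2.2]
  have hDne : ∀ (δ : ℝ), |δ| ≤ 1/(2*C1) → ∀ x, (1:ℝ) + δ * h x ≠ 0 := by
    intro δ hδ x; have := (hD δ hδ x).1; intro hcon; rw [hcon] at this; linarith
  -- key algebraic identity
  have hkey : ∀ (δ : ℝ), |δ| ≤ 1/(2*C1) → ∀ x,
      b x * (deriv (fun y => p y + δ * (p y * h y)) x)^2 / (p x + δ * (p x * h x))
      = F0 x + δ * L x + δ^2 * (Q x / (1 + δ * h x)) := by
    intro δ hδ x
    have hne := hDne δ hδ x
    have hpnex := hpne x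
    rw [hderivu δ x, hF0def, hLdef, hQdef]
    have hden : p x + δ * (p x * h x) = p x * (1 + δ * h x) := by ring
    rw [hden]
    field_simp
    ring
  -- choice of small δ₁
  set δm : ℝ := min ε (1/(2*C1)) with hδmdef
  have hδmpos : 0 < δm := lt_min hεpos (by positivity)
  set δ₁ : ℝ := δm / 2 with hδ₁def
  have hδ₁pos : 0 < δ₁ := by positivity
  have hδ₁ε : |δ₁| < ε := by
    rw [abs_of_pos hδ₁pos]
    have := min_le_left ε (1/(2*C1)); rw [← hδmdef] at this; linarith
  have hδ₁C : |δ₁| ≤ 1/(2*C1) := by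
    rw [abs_of_pos hδ₁pos]
    have := min_le_right ε (1/(2*C1)); rw [← hδmdef] at this; linarith
  have hδ₁C' : |(-δ₁)| ≤ 1/(2*C1) := by rwa [abs_neg]
  have h1 := hpert δ₁ hδ₁ε
  have h2 := hpert (-δ₁) (by rwa [abs_neg])
  -- continuity of the Q_δ family
  have cQd : ∀ (δ : ℝ), |δ| ≤ 1/(2*C1) → Continuous (fun x => Q x / (1 + δ * h x)) :=
    fun δ hδ => cQ.div (continuous_const.add (continuous_const.mul ch)) (hDne δ hδ)
  -- integrability of Q
  have hQQint : Integrable (fun x => Q x / (1 + δ₁ * h x) + Q x / (1 + (-δ₁) * h x)) := by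
    have base : Integrable (fun x =>
        ((b x * (deriv (fun y => p y + δ₁ * (p y * h y)) x)^2 / (p x + δ₁ * (p x * h x)))
          + (b x * (deriv (fun y => p y + (-δ₁) * (p y * h y)) x)^2
              / (p x + (-δ₁) * (p x * h x)))
          - 2 * F0 x) * (1/δ₁^2)) := ((h1.add h2).sub (hJ_int.const_mul 2)).mul_const _
    apply base.congr
    apply ae_of_all
    intro x
    beta_reduce
    rw [hkey δ₁ hδ₁C x, hkey (-δ₁) hδ₁C' x]
    have hδne : δ₁ ≠ 0 := hδ₁pos.ne'
    clear_value δ₁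
    generalize F0 x = A
    generalize L x = l
    generalize Q x / (1 + δ₁ * h x) = q1
    generalize Q x / (1 + -δ₁ * h x) = q2
    field_simp
    ring
  have hQint : Integrable Q := by
    apply hQQint.mono cQ.aestronglyMeasurable
    apply ae_of_all
    intro x
    have hd1 := hD δ₁ hδ₁C x
    have hd2 := hD (-δ₁) hδ₁C' x
    have hq := hQnn x
    have e1 : (2/3) * Q x ≤ Q x / (1 + δ₁ * h x) := by
      rw [le_div_iff₀ (by linarith [hd1.1])]; nlinarith [hd1.2]
    have e2 : (2/3) * Q x ≤ Q x / (1 + (-δ₁) * h x) := by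
      rw [le_div_iff₀ (by linarith [hd2.1])]; nlinarith [hd2.2]
    rw [Real.norm_eq_abs, Real.norm_eq_abs, abs_of_nonneg hq, abs_of_nonneg (by linarith : (0:ℝ) ≤ Q x / (1 + δ₁ * h x) + Q x / (1 + (-δ₁) * h x))]
    linarith
  -- integrability and bounds for Q_δ
  have hQdint : ∀ (δ : ℝ), |δ| ≤ 1/(2*C1) → Integrable (fun x => Q x / (1 + δ * h x)) := by
    intro δ hδ
    apply (hQint.const_mul 2).mono (cQd δ hδ).aestronglyMeasurable
    apply ae_of_all
    intro x
    have hd := hD δ hδ x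
    have hq := hQnn x
    have e1 : Q x / (1 + δ * h x) ≤ 2 * Q x := by
      rw [div_le_iff₀ (by linarith [hd.1])]; nlinarith [hd.1]
    have e2 : (0:ℝ) ≤ Q x / (1 + δ * h x) := div_nonneg hq (by linarith [hd.1])
    rw [Real.norm_eq_abs, Real.norm_eq_abs, abs_of_nonneg e2,
      abs_of_nonneg (by linarith : (0:ℝ) ≤ 2 * Q x)]
    linarith
  have hQdbnd : ∀ (δ : ℝ), |δ| ≤ 1/(2*C1) →
      |∫ x, Q x / (1 + δ * h x)| ≤ 2 * ∫ x, Q x := by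
    intro δ hδ
    have e0 : (0:ℝ) ≤ ∫ x, Q x / (1 + δ * h x) :=
      integral_nonneg fun x => div_nonneg (hQnn x) (by linarith [(hD δ hδ x).1])
    rw [abs_of_nonneg e0]
    have := integral_mono (hQdint δ hδ) (hQint.const_mul 2) (fun x => by
      have hd := hD δ hδ x
      have hq := hQnn x
      rw [div_le_iff₀ (by linarith [hd.1])]; nlinarith [hd.1])
    simpa [integral_const_mul] using this
  -- integrability of L
  have hLint : Integrable L := by
    have base : Integrable (fun x =>
        ((b x * (deriv (fun y => p y + δ₁ * (p y * h y)) x)^2 / (p x + δ₁ * (p x * h x)))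
          - F0 x) * (1/δ₁) - δ₁ * (Q x / (1 + δ₁ * h x))) :=
      ((h1.sub hJ_int).mul_const _).sub ((hQdint δ₁ hδ₁C).const_mul _)
    apply base.congr
    apply ae_of_all
    intro x
    beta_reduce
    rw [hkey δ₁ hδ₁C x]
    have hδne : δ₁ ≠ 0 := hδ₁pos.ne'
    clear_value δ₁
    generalize F0 x = A
    generalize L x = l
    generalize Q x / (1 + δ₁ * h x) = q
    field_simp
    ring
  -- the difference quotient identity
  have hquot : ∀ δ : ℝ, δ ≠ 0 → |δ| < δm →
      (fisherInfo b (fun x => p x + δ * (p x * h x)) - fisherInfo b p) / δ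
        = (∫ x, L x) + δ * ∫ x, Q x / (1 + δ * h x) := by
    intro δ hδ0 hδm'
    have hδε : |δ| < ε := lt_of_lt_of_le hδm' (by rw [hδmdef]; exact min_le_left _ _)
    have hδC : |δ| ≤ 1/(2*C1) :=
      le_of_lt (lt_of_lt_of_le hδm' (by rw [hδmdef]; exact min_le_right _ _))
    have e1 : fisherInfo b (fun x => p x + δ * (p x * h x))
        = ∫ x, (F0 x + δ * L x + δ^2 * (Q x / (1 + δ * h x))) := by
      rw [fisherInfo]
      refine integral_congr_ae (ae_of_all _ fun x => ?_)
      beta_reduce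
      exact hkey δ hδC x
    have e0 : fisherInfo b p = ∫ x, F0 x := rfl
    have i2 : Integrable (fun x => δ * L x) := hLint.const_mul δ
    have i3 : Integrable (fun x => δ^2 * (Q x / (1 + δ * h x))) :=
      (hQdint δ hδC).const_mul (δ^2)
    have i12 : Integrable (fun x => F0 x + δ * L x) := hJ_int.add i2
    rw [e1, e0, integral_add i12 i3, integral_add hJ_int i2,
      integral_const_mul, integral_const_mul]
    field_simp
    ring
  -- boundary behaviour inputs
  have hp0top : Tendsto p atTop (nhds 0) := by
    have := hp_decay_top 0 0
    simpa [iteratedDeriv_zero] using this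
  have hp0bot : Tendsto p atBot (nhds 0) := by
    have := hp_decay_bot 0 0
    simpa [iteratedDeriv_zero] using this
  -- integration by parts: the boundary term vanishes
  have hgdderiv : ∀ x, HasDerivAt (fun y => b y * deriv p y * h y)
      (deriv bp' x * h x + bp' x * deriv h x) x := by
    intro x
    exact ((hdbp' x).hasDerivAt.mul ((hdh x).hasDerivAt))
  set gd : ℝ → ℝ := fun x => deriv bp' x * h x + bp' x * deriv h x with hgddef
  have hgdint : Integrable gd := by
    have base := (hLint.sub hgrad_int).const_mul (1/2)
    apply base.congr
    apply ae_of_all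
    intro x
    show (1/2) * (L x - h x * (F0 x - 2 * deriv bp' x)) = gd x
    rw [hLdef, hF0def, hgddef, hbp'def]
    have := hpne x
    field_simp
    ring
  have hzero : ∫ x, gd x = 0 :=
    integral_deriv_bph_eq_zero b p h hb_pos hp_pos cp cp' cb hdp hp0top hp0bot hJ_int
      C1 hC1pos hC1 gd hgdderiv hgdint
  have hLG : (∫ x, L x) = ∫ x, h x * (F0 x - 2 * deriv bp' x) := by
    have e := integral_sub hLint hgrad_int
    have e2 : ∫ x, (L x - h x * (F0 x - 2 * deriv bp' x)) = 2 * ∫ x, gd x := by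
      rw [← integral_const_mul]
      refine integral_congr_ae (ae_of_all _ fun x => ?_)
      rw [hLdef, hF0def, hgddef, hbp'def]
      have := hpne x
      field_simp
      ring
    have e3 : (∫ x, L x) - (∫ x, h x * (F0 x - 2 * deriv bp' x)) = 0 := by
      rw [← e, e2, hzero]; ring
    linarith
  -- the tail term tends to zero
  have htail : Tendsto (fun δ : ℝ => δ * ∫ x, Q x / (1 + δ * h x))
      (nhdsWithin 0 {(0:ℝ)}ᶜ) (nhds 0) := by
    apply squeeze_zero_norm' (a := fun δ : ℝ => |δ| * (2 * ∫ x, Q x))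
    · have hev : ∀ᶠ δ in nhdsWithin (0:ℝ) {(0:ℝ)}ᶜ, |δ| ≤ 1/(2*C1) := by
        apply eventually_nhdsWithin_of_eventually_nhds
        filter_upwards [Metric.ball_mem_nhds (0:ℝ) (by positivity : (0:ℝ) < 1/(2*C1))]
          with δ hδ
        rw [Metric.mem_ball, Real.dist_eq, sub_zero] at hδ
        exact hδ.le
      filter_upwards [hev] with δ hδ
      rw [Real.norm_eq_abs, abs_mul]
      exact mul_le_mul_of_nonneg_left (hQdbnd δ hδ) (abs_nonneg _)
    · have : Tendsto (fun δ : ℝ => |δ| * (2 * ∫ x, Q x)) (nhds 0)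
          (nhds (|(0:ℝ)| * (2 * ∫ x, Q x))) :=
        ((continuous_abs.mul continuous_const).tendsto 0)
      simp only [abs_zero, zero_mul] at this
      exact this.mono_left nhdsWithin_le_nhds
  have hmain : Tendsto (fun δ : ℝ => (∫ x, L x) + δ * ∫ x, Q x / (1 + δ * h x))
      (nhdsWithin 0 {(0:ℝ)}ᶜ) (nhds (∫ x, L x)) := by
    have h0 : Tendsto (fun _ : ℝ => (∫ x, L x)) (nhdsWithin (0:ℝ) {(0:ℝ)}ᶜ)
        (nhds (∫ x, L x)) := tendsto_const_nhds
    simpa using h0.add htail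
  have hgoalval : (∫ x, h x * (F0 x - 2 * deriv bp' x)) = ∫ x, L x := hLG.symm
  rw [hgoalval]
  apply hmain.congr'
  have hev0 : ∀ᶠ δ in nhdsWithin (0:ℝ) {(0:ℝ)}ᶜ, δ ≠ 0 := by
    filter_upwards [self_mem_nhdsWithin] with δ hδ
    simpa using hδ
  have hevm : ∀ᶠ δ in nhdsWithin (0:ℝ) {(0:ℝ)}ᶜ, |δ| < δm := by
    apply eventually_nhdsWithin_of_eventually_nhds
    filter_upwards [Metric.ball_mem_nhds (0:ℝ) hδmpos] with δ hδ
    rwa [Metric.mem_ball, Real.dist_eq, sub_zero] at hδ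
  filter_upwards [hev0, hevm] with δ hδ0 hδm'
  exact (hquot δ hδ0 hδm').symm
end

section
/- Let b : ℝ → (0,∞) be smooth and let p, q be smooth, strictly positive probability densities on ℝ decaying rapidly at infinity together with their derivatives, with all integrals below finite. Then the relative Fisher information equals the Bregman divergence of J_b: ∫_ℝ p(x) b(x) ( d/dx log(p(x)/q(x)) )² dx = J_b(p) − J_b(q) − ∫_ℝ (p(x) − q(x)) ( b(x) q′(x)²/q(x)² − 2 (b q′)′(x)/q(x) ) dx. -/
open MeasureTheory Real Filter Set

/-- **Relative Fisher information as a Bregman divergence.**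
For a smooth positive weight `b` and smooth, strictly positive, rapidly decreasing
probability densities `p, q` (with all integrals finite),
`J_b(p‖q) = J_b(p) - J_b(q) - ⟨∇J_b(q), p - q⟩`, i.e.
`∫ p b (log(p/q))'² = J_b(p) - J_b(q) - ∫ (p - q) (b q'²/q² - 2 (b q')'/q)`. -/
theorem relativeFisherInfo_eq_bregman
    (b : ℝ → ℝ) (hb_smooth : ContDiff ℝ (⊤ : ℕ∞) b) (hb_pos : ∀ x, 0 < b x)
    (p q : ℝ → ℝ)
    (hp_smooth : ContDiff ℝ (⊤ : ℕ∞) p) (hp_pos : ∀ x, 0 < p x)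
    (hq_smooth : ContDiff ℝ (⊤ : ℕ∞) q) (hq_pos : ∀ x, 0 < q x)
    (hp_int : Integrable p) (hp_density : ∫ x, p x = 1)
    (hq_int : Integrable q) (hq_density : ∫ x, q x = 1)
    -- `p` and `q` decay rapidly at infinity together with all their derivatives
    (hp_decay_top : ∀ n k : ℕ, Tendsto (fun x => x ^ n * iteratedDeriv k p x) atTop (nhds 0))
    (hp_decay_bot : ∀ n k : ℕ, Tendsto (fun x => x ^ n * iteratedDeriv k p x) atBot (nhds 0))
    (hq_decay_top : ∀ n k : ℕ, Tendsto (fun x => x ^ n * iteratedDeriv k q x) atTop (nhds 0))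
    (hq_decay_bot : ∀ n k : ℕ, Tendsto (fun x => x ^ n * iteratedDeriv k q x) atBot (nhds 0))
    -- all integrals below are finite
    (hJp_int : Integrable (fun x => b x * (deriv p x) ^ 2 / p x))
    (hJq_int : Integrable (fun x => b x * (deriv q x) ^ 2 / q x))
    (hrel_int : Integrable (fun x =>
      p x * b x * (deriv (fun y => Real.log (p y / q y)) x) ^ 2))
    (hgrad_int : Integrable (fun x =>
      (p x - q x) * (b x * (deriv q x) ^ 2 / (q x) ^ 2
        - 2 * deriv (fun y => b y * deriv q y) x / q x))) :
    ∫ x, p x * b x * (deriv (fun y => Real.log (p y / q y)) x) ^ 2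
      = fisherInfo b p - fisherInfo b q
        - ∫ x, (p x - q x) * (b x * (deriv q x) ^ 2 / (q x) ^ 2
            - 2 * deriv (fun y => b y * deriv q y) x / q x) := by
  have hbd : Differentiable ℝ b := hb_smooth.differentiable (by simp)
  have hpd : Differentiable ℝ p := hp_smooth.differentiable (by simp)
  have hqd : Differentiable ℝ q := hq_smooth.differentiable (by simp)
  have hq'' : ContDiff ℝ ((⊤:ℕ∞) : WithTop ℕ∞) q := hq_smooth.of_le (by simp)
  have hq' := (contDiff_infty_iff_deriv.mp hq'').2
  have hqd' : Differentiable ℝ (deriv q) := hq'.differentiable (by simp)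
  have hpne : ∀ x, p x ≠ 0 := fun x => (hp_pos x).ne'
  have hqne : ∀ x, q x ≠ 0 := fun x => (hq_pos x).ne'
  -- the derivative of `log (p/q)`
  have hlog : ∀ x, deriv (fun y => Real.log (p y / q y)) x
      = deriv p x / p x - deriv q x / q x := by
    intro x
    have h1 : HasDerivAt (fun y => p y / q y)
        ((deriv p x * q x - p x * deriv q x) / q x ^ 2) x :=
      ((hpd x).hasDerivAt).div ((hqd x).hasDerivAt) (hqne x)
    have h2 := (h1.log (div_ne_zero (hpne x) (hqne x))).deriv
    have hp0 := hpne x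
    have hq0 := hqne x
    rw [h2]
    field_simp
  -- the auxiliary function `F = b q' (p - q) / q` and its derivative `Fd`
  set F : ℝ → ℝ := fun x => b x * deriv q x * (p x - q x) / q x with hF_def
  set Fd : ℝ → ℝ := fun x =>
    ((deriv (fun y => b y * deriv q y) x * (p x - q x)
        + b x * deriv q x * (deriv p x - deriv q x)) * q x
      - b x * deriv q x * (p x - q x) * deriv q x) / q x ^ 2 with hFd_def
  have hF : ∀ x, HasDerivAt F (Fd x) x := by
    intro x
    have hbq' : HasDerivAt (fun y => b y * deriv q y)
        (deriv (fun y => b y * deriv q y) x) x :=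
      ((hbd x).mul (hqd' x)).hasDerivAt
    have h1 : HasDerivAt (fun y => b y * deriv q y * (p y - q y))
        (deriv (fun y => b y * deriv q y) x * (p x - q x)
          + b x * deriv q x * (deriv p x - deriv q x)) x :=
      hbq'.mul (((hpd x).hasDerivAt).sub ((hqd x).hasDerivAt))
    exact h1.div ((hqd x).hasDerivAt) (hqne x)
  -- the key pointwise algebraic identity
  have key : ∀ x,
      p x * b x * (deriv (fun y => Real.log (p y / q y)) x) ^ 2
        - b x * (deriv p x) ^ 2 / p x
        + b x * (deriv q x) ^ 2 / q x
        + (p x - q x) * (b x * (deriv q x) ^ 2 / (q x) ^ 2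
            - 2 * deriv (fun y => b y * deriv q y) x / q x)
      = -2 * Fd x := by
    intro x
    rw [hlog x]
    simp only [hFd_def]
    have hp0 := hpne x
    have hq0 := hqne x
    field_simp
    ring
  -- integrability of `Fd`
  have hG_int : Integrable (fun x =>
      p x * b x * (deriv (fun y => Real.log (p y / q y)) x) ^ 2
        - b x * (deriv p x) ^ 2 / p x
        + b x * (deriv q x) ^ 2 / q x
        + (p x - q x) * (b x * (deriv q x) ^ 2 / (q x) ^ 2
            - 2 * deriv (fun y => b y * deriv q y) x / q x)) :=
    ((hrel_int.sub hJp_int).add hJq_int).add hgrad_int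
  have hFd_int : Integrable Fd := by
    have h1 := hG_int.const_mul (-2 : ℝ)⁻¹
    refine h1.congr (Eventually.of_forall fun x => ?_)
    simp only [key x]
    ring
  -- fundamental theorem of calculus for `F`
  have hftcF : ∀ a c : ℝ, ∫ x in a..c, Fd x = F c - F a := fun a c =>
    intervalIntegral.integral_eq_sub_of_hasDerivAt (fun t _ => hF t)
      hFd_int.intervalIntegrable
  -- `F` converges at `±∞`
  have hLtop : Tendsto F atTop (nhds (F 0 + ∫ x in Ioi (0:ℝ), Fd x)) := by
    have h1 := intervalIntegral_tendsto_integral_Ioi 0 hFd_int.integrableOn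
      (tendsto_id (α := ℝ))
    have h2 : Tendsto (fun X : ℝ => F 0 + ∫ x in (0:ℝ)..X, Fd x) atTop
        (nhds (F 0 + ∫ x in Ioi (0:ℝ), Fd x)) := tendsto_const_nhds.add h1
    refine h2.congr fun X => ?_
    rw [hftcF 0 X]; ring
  have hLbot : Tendsto F atBot (nhds (F 0 - ∫ x in Iic (0:ℝ), Fd x)) := by
    have h1 := intervalIntegral_tendsto_integral_Iic 0 hFd_int.integrableOn
      (tendsto_id (α := ℝ))
    have h2 : Tendsto (fun X : ℝ => F 0 - ∫ x in X..(0:ℝ), Fd x) atBot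
        (nhds (F 0 - ∫ x in Iic (0:ℝ), Fd x)) := tendsto_const_nhds.sub h1
    refine h2.congr fun X => ?_
    rw [hftcF X 0]; ring
  -- auxiliary integrability : `b q'^2 p / q^2` is integrable
  have hpbv2_int : Integrable (fun x => b x * (deriv q x) ^ 2 * p x / (q x) ^ 2) := by
    have hmaj : Integrable (fun x => 2 * (b x * (deriv p x) ^ 2 / p x)
        + 2 * (p x * b x * (deriv (fun y => Real.log (p y / q y)) x) ^ 2)) :=
      (hJp_int.const_mul 2).add (hrel_int.const_mul 2)
    refine hmaj.mono' ?_ (Eventually.of_forall fun x => ?_)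
    · refine Continuous.aestronglyMeasurable ?_
      exact (((hb_smooth.continuous.mul ((hq'.continuous).pow 2)).mul
        hp_smooth.continuous).div ((hq_smooth.continuous).pow 2)
        (fun x => pow_ne_zero 2 (hqne x)))
    · have hU := hlog x
      have hnn : 0 ≤ b x * (deriv q x) ^ 2 * p x / (q x) ^ 2 :=
        div_nonneg (mul_nonneg (mul_nonneg (hb_pos x).le (sq_nonneg _)) (hp_pos x).le)
          (sq_nonneg _)
      rw [Real.norm_eq_abs, abs_of_nonneg hnn, hU]
      have hdiff : 2 * (b x * (deriv p x) ^ 2 / p x)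
          + 2 * (p x * b x * (deriv p x / p x - deriv q x / q x) ^ 2)
          - b x * (deriv q x) ^ 2 * p x / (q x) ^ 2
          = b x * (2 * deriv p x * q x - deriv q x * p x) ^ 2 / (p x * (q x) ^ 2) := by
        have hp0 := hpne x
        have hq0 := hqne x
        field_simp
        ring
      have hge : 0 ≤ b x * (2 * deriv p x * q x - deriv q x * p x) ^ 2 / (p x * (q x) ^ 2) :=
        div_nonneg (mul_nonneg (hb_pos x).le (sq_nonneg _))
          (mul_nonneg (hp_pos x).le (sq_nonneg _))
      linarith [hdiff, hge]
  -- `log (q x)` tends to `-∞` at `±∞`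
  have hq0top : Tendsto q atTop (nhds 0) := by
    have := hq_decay_top 0 0
    simpa [iteratedDeriv_zero] using this
  have hq0bot : Tendsto q atBot (nhds 0) := by
    have := hq_decay_bot 0 0
    simpa [iteratedDeriv_zero] using this
  have hlogq_top : Tendsto (fun x => Real.log (q x)) atTop atBot :=
    Real.tendsto_log_nhdsGT_zero.comp
      (tendsto_nhdsWithin_of_tendsto_nhds_of_eventually_within q hq0top
        (Eventually.of_forall fun x => hq_pos x))
  have hlogq_bot : Tendsto (fun x => Real.log (q x)) atBot atBot :=
    Real.tendsto_log_nhdsGT_zero.comp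
      (tendsto_nhdsWithin_of_tendsto_nhds_of_eventually_within q hq0bot
        (Eventually.of_forall fun x => hq_pos x))
  -- derivative of `log ∘ q`
  have hlogq_deriv : ∀ t : ℝ, HasDerivAt (fun y => Real.log (q y)) (deriv q t / q t) t :=
    fun t => ((hqd t).hasDerivAt).log (hqne t)
  have hvcont : Continuous (fun x => deriv q x / q x) :=
    (hq'.continuous).div hq_smooth.continuous hqne
  -- pointwise bound: where `|L|/2 < |F x|`, we control `|q'/q|`
  have hbound : ∀ L : ℝ, L ≠ 0 → ∀ x : ℝ, |L| / 2 < |F x| →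
      ‖deriv q x / q x‖ ≤ 2 / |L| * (b x * (deriv q x) ^ 2 / q x
        + b x * (deriv q x) ^ 2 * p x / (q x) ^ 2) := by
    intro L hL0 x hx
    have hLpos : 0 < |L| := abs_pos.2 hL0
    have hqx := hq_pos x
    have hFx : |F x| = b x * |deriv q x| * |p x - q x| / q x := by
      simp only [hF_def]
      rw [abs_div, abs_of_pos hqx, abs_mul, abs_mul, abs_of_pos (hb_pos x)]
    have hpq : |p x - q x| ≤ p x + q x := by
      rw [abs_le]
      constructor <;> nlinarith [hp_pos x, hq_pos x]
    have h1 : |L| / 2 ≤ b x * |deriv q x| * (p x + q x) / q x := by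
      refine le_trans hx.le ?_
      rw [hFx]
      gcongr
      exact mul_nonneg (hb_pos x).le (abs_nonneg _)
    have h2 : |L| / 2 * (|deriv q x| / q x)
        ≤ b x * |deriv q x| * (p x + q x) / q x * (|deriv q x| / q x) :=
      mul_le_mul_of_nonneg_right h1 (div_nonneg (abs_nonneg _) (hq_pos x).le)
    have h3 : b x * |deriv q x| * (p x + q x) / q x * (|deriv q x| / q x)
        = b x * (deriv q x) ^ 2 / q x + b x * (deriv q x) ^ 2 * p x / (q x) ^ 2 := by
      have h3' : b x * |deriv q x| * (p x + q x) / q x * (|deriv q x| / q x)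
          = b x * |deriv q x| ^ 2 / q x + b x * |deriv q x| ^ 2 * p x / (q x) ^ 2 := by
        have habs : |deriv q x| * |deriv q x| = deriv q x ^ 2 := by
          rw [← abs_mul, ← sq, abs_sq]
        field_simp
        ring
      rw [h3', sq_abs]
    rw [Real.norm_eq_abs, abs_div, abs_of_pos hqx]
    rw [h3] at h2
    calc |deriv q x| / q x
        = 2 / |L| * (|L| / 2 * (|deriv q x| / q x)) := by
          field_simp
      _ ≤ 2 / |L| * (b x * (deriv q x) ^ 2 / q x
            + b x * (deriv q x) ^ 2 * p x / (q x) ^ 2) := by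
          exact mul_le_mul_of_nonneg_left h2 (by positivity)
  -- limits of `F` at `±∞` vanish
  have hzero_top : ∀ L : ℝ, Tendsto F atTop (nhds L) → L = 0 := by
    intro L hL
    by_contra hL0
    have hev : ∀ᶠ x in atTop, |L| / 2 < |F x| :=
      hL.abs.eventually (eventually_gt_nhds (half_lt_self (abs_pos.2 hL0)))
    obtain ⟨M, hM⟩ := eventually_atTop.mp hev
    have hvint : IntegrableOn (fun x => deriv q x / q x) (Ici M) := by
      refine Integrable.mono' (((hJq_int.add hpbv2_int).const_mul (2 / |L|)).integrableOn)
        (hvcont.aestronglyMeasurable.restrict) ?_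
      rw [ae_restrict_iff' measurableSet_Ici]
      exact Eventually.of_forall fun x hx => hbound L hL0 x (hM x hx)
    have hftc2 : ∀ X, M ≤ X → Real.log (q X)
        = Real.log (q M) + ∫ x in M..X, deriv q x / q x := by
      intro X hX
      have hii : IntervalIntegrable (fun x => deriv q x / q x) volume M X := by
        refine (hvint.mono_set ?_).intervalIntegrable
        rw [uIcc_of_le hX]
        exact Icc_subset_Ici_self
      rw [intervalIntegral.integral_eq_sub_of_hasDerivAt (fun t _ => hlogq_deriv t) hii]
      ring
    have htend : Tendsto (fun X => Real.log (q X)) atTop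
        (nhds (Real.log (q M) + ∫ x in Ioi M, deriv q x / q x)) := by
      have h1 := intervalIntegral_tendsto_integral_Ioi M
        (hvint.mono_set Ioi_subset_Ici_self) (tendsto_id (α := ℝ))
      have h2 : Tendsto (fun X : ℝ => Real.log (q M) + ∫ x in M..X, deriv q x / q x)
          atTop (nhds (Real.log (q M) + ∫ x in Ioi M, deriv q x / q x)) :=
        tendsto_const_nhds.add h1
      refine h2.congr' ?_
      filter_upwards [eventually_ge_atTop M] with X hX
      exact (hftc2 X hX).symm
    exact absurd htend (not_tendsto_nhds_of_tendsto_atBot hlogq_top _)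
  have hzero_bot : ∀ L : ℝ, Tendsto F atBot (nhds L) → L = 0 := by
    intro L hL
    by_contra hL0
    have hev : ∀ᶠ x in atBot, |L| / 2 < |F x| :=
      hL.abs.eventually (eventually_gt_nhds (half_lt_self (abs_pos.2 hL0)))
    obtain ⟨M, hM⟩ := eventually_atBot.mp hev
    have hvint : IntegrableOn (fun x => deriv q x / q x) (Iic M) := by
      refine Integrable.mono' (((hJq_int.add hpbv2_int).const_mul (2 / |L|)).integrableOn)
        (hvcont.aestronglyMeasurable.restrict) ?_
      rw [ae_restrict_iff' measurableSet_Iic]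
      exact Eventually.of_forall fun x hx => hbound L hL0 x (hM x hx)
    have hftc2 : ∀ X, X ≤ M → Real.log (q X)
        = Real.log (q M) - ∫ x in X..M, deriv q x / q x := by
      intro X hX
      have hii : IntervalIntegrable (fun x => deriv q x / q x) volume X M := by
        refine (hvint.mono_set ?_).intervalIntegrable
        rw [uIcc_of_le hX]
        exact Icc_subset_Iic_self
      rw [intervalIntegral.integral_eq_sub_of_hasDerivAt (fun t _ => hlogq_deriv t) hii]
      ring
    have htend : Tendsto (fun X => Real.log (q X)) atBot
        (nhds (Real.log (q M) - ∫ x in Iic M, deriv q x / q x)) := by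
      have h1 := intervalIntegral_tendsto_integral_Iic M hvint (tendsto_id (α := ℝ))
      have h2 : Tendsto (fun X : ℝ => Real.log (q M) - ∫ x in X..M, deriv q x / q x)
          atBot (nhds (Real.log (q M) - ∫ x in Iic M, deriv q x / q x)) :=
        tendsto_const_nhds.sub h1
      refine h2.congr' ?_
      filter_upwards [eventually_le_atBot M] with X hX
      exact (hftc2 X hX).symm
    exact absurd htend (not_tendsto_nhds_of_tendsto_atBot hlogq_bot _)
  -- assembling: the total integral of `Fd` vanishes
  have hItop : F 0 + ∫ x in Ioi (0:ℝ), Fd x = 0 := hzero_top _ hLtop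
  have hIbot : F 0 - ∫ x in Iic (0:ℝ), Fd x = 0 := hzero_bot _ hLbot
  have hFd_total : ∫ x, Fd x = 0 := by
    rw [← intervalIntegral.integral_Iic_add_Ioi (b := (0:ℝ)) hFd_int.integrableOn
      hFd_int.integrableOn]
    linarith
  -- conclusion
  have hG_total : (∫ x, p x * b x * (deriv (fun y => Real.log (p y / q y)) x) ^ 2)
      - (∫ x, b x * (deriv p x) ^ 2 / p x)
      + (∫ x, b x * (deriv q x) ^ 2 / q x)
      + (∫ x, (p x - q x) * (b x * (deriv q x) ^ 2 / (q x) ^ 2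
          - 2 * deriv (fun y => b y * deriv q y) x / q x)) = 0 := by
    have h12 : Integrable (fun x =>
        p x * b x * (deriv (fun y => Real.log (p y / q y)) x) ^ 2
          - b x * (deriv p x) ^ 2 / p x) := hrel_int.sub hJp_int
    have h123 : Integrable (fun x =>
        (p x * b x * (deriv (fun y => Real.log (p y / q y)) x) ^ 2
          - b x * (deriv p x) ^ 2 / p x) + b x * (deriv q x) ^ 2 / q x) :=
      h12.add hJq_int
    rw [← integral_sub hrel_int hJp_int, ← integral_add h12 hJq_int,
      ← integral_add h123 hgrad_int]
    have : ∫ x, (p x * b x * (deriv (fun y => Real.log (p y / q y)) x) ^ 2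
        - b x * (deriv p x) ^ 2 / p x
        + b x * (deriv q x) ^ 2 / q x
        + (p x - q x) * (b x * (deriv q x) ^ 2 / (q x) ^ 2
            - 2 * deriv (fun y => b y * deriv q y) x / q x))
        = ∫ x, -2 * Fd x := by
      exact integral_congr_ae (Eventually.of_forall fun x => key x)
    rw [this, integral_const_mul, hFd_total, mul_zero]
  simp only [fisherInfo]
  linarith
end

section
/- Let b : ℝ → (0,∞), let p, q be smooth strictly positive probability densities on ℝ with J_b(p) and J_b(q) finite, and let λ ∈ [0,1]. Then the generalized Fisher information is convex: J_b(λp + (1−λ)q) ≤ λ J_b(p) + (1−λ) J_b(q). -/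
open MeasureTheory Real Filter

lemma fisher_key (b u s v w lam : ℝ) (hb : 0 < b) (hu : 0 < u) (hs : 0 < s)
    (h0 : 0 ≤ lam) (h1 : lam ≤ 1) :
    b * (lam * v + (1 - lam) * w) ^ 2 / (lam * u + (1 - lam) * s)
      ≤ lam * (b * v ^ 2 / u) + (1 - lam) * (b * w ^ 2 / s) := by
  have hd : 0 < lam * u + (1 - lam) * s := by
    rcases eq_or_lt_of_le h0 with h | h
    · simpa [← h] using hs
    · have : 0 ≤ (1 - lam) * s := mul_nonneg (by linarith) hs.le
      nlinarith [mul_pos h hu]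
  rw [div_le_iff₀ hd]
  have key : u * s * (lam * v + (1 - lam) * w) ^ 2
      ≤ (lam * v ^ 2 * s + (1 - lam) * w ^ 2 * u) * (lam * u + (1 - lam) * s) := by
    nlinarith [sq_nonneg (v * s - w * u), mul_nonneg (mul_nonneg h0 (by linarith : (0:ℝ) ≤ 1 - lam)) (sq_nonneg (v * s - w * u))]
  have expand : lam * (b * v ^ 2 / u) + (1 - lam) * (b * w ^ 2 / s)
      = b * (lam * v ^ 2 * s + (1 - lam) * w ^ 2 * u) / (u * s) := by
    field_simp
  rw [expand, div_mul_eq_mul_div, le_div_iff₀ (mul_pos hu hs)]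
  nlinarith [mul_le_mul_of_nonneg_left key hb.le]

/-- **Convexity of the generalized Fisher information.**
For a positive weight `b`, smooth strictly positive probability densities `p, q`
with finite generalized Fisher information, and `λ ∈ [0,1]`,
`J_b(λ p + (1-λ) q) ≤ λ J_b(p) + (1-λ) J_b(q)`. -/
theorem fisherInfo_convex
    (b : ℝ → ℝ) (hb_pos : ∀ x, 0 < b x)
    (p q : ℝ → ℝ)
    (hp_smooth : ContDiff ℝ (⊤ : ℕ∞) p) (hp_pos : ∀ x, 0 < p x)
    (hq_smooth : ContDiff ℝ (⊤ : ℕ∞) q) (hq_pos : ∀ x, 0 < q x)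
    (hp_int : Integrable p) (hp_density : ∫ x, p x = 1)
    (hq_int : Integrable q) (hq_density : ∫ x, q x = 1)
    -- finiteness of the Fisher informations
    (hJp_int : Integrable (fun x => b x * (deriv p x) ^ 2 / p x))
    (hJq_int : Integrable (fun x => b x * (deriv q x) ^ 2 / q x))
    (lam : ℝ) (hlam0 : 0 ≤ lam) (hlam1 : lam ≤ 1) :
    fisherInfo b (fun x => lam * p x + (1 - lam) * q x)
      ≤ lam * fisherInfo b p + (1 - lam) * fisherInfo b q := by
  have hderiv : ∀ x, deriv (fun x => lam * p x + (1 - lam) * q x) x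
      = lam * deriv p x + (1 - lam) * deriv q x := by
    intro x
    have hp' := (hp_smooth.differentiable (by simp) x).hasDerivAt
    have hq' := (hq_smooth.differentiable (by simp) x).hasDerivAt
    exact ((hp'.const_mul lam).add (hq'.const_mul (1 - lam))).deriv
  set f : ℝ → ℝ := fun x => b x * (deriv p x) ^ 2 / p x with hf
  set g : ℝ → ℝ := fun x => b x * (deriv q x) ^ 2 / q x with hg
  have hpt : ∀ x, b x * (deriv (fun x => lam * p x + (1 - lam) * q x) x) ^ 2
        / (lam * p x + (1 - lam) * q x) ≤ lam * f x + (1 - lam) * g x := by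
    intro x
    rw [hderiv x]
    exact fisher_key (b x) (p x) (q x) (deriv p x) (deriv q x) lam
      (hb_pos x) (hp_pos x) (hq_pos x) hlam0 hlam1
  have hnonneg : ∀ x, 0 ≤ b x * (deriv (fun x => lam * p x + (1 - lam) * q x) x) ^ 2
        / (lam * p x + (1 - lam) * q x) := by
    intro x
    have hd : 0 < lam * p x + (1 - lam) * q x := by
      rcases eq_or_lt_of_le hlam0 with h | h
      · simpa [← h] using hq_pos x
      · nlinarith [mul_pos h (hp_pos x), mul_nonneg (by linarith : (0:ℝ) ≤ 1 - lam) (hq_pos x).le]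
    exact div_nonneg (mul_nonneg (hb_pos x).le (sq_nonneg _)) hd.le
  have hRHS : Integrable (fun x => lam * f x + (1 - lam) * g x) :=
    (hJp_int.const_mul lam).add (hJq_int.const_mul (1 - lam))
  have hle : fisherInfo b (fun x => lam * p x + (1 - lam) * q x)
      ≤ ∫ x, (lam * f x + (1 - lam) * g x) := by
    refine integral_mono_of_nonneg (Filter.Eventually.of_forall hnonneg) hRHS
      (Filter.Eventually.of_forall hpt)
  calc fisherInfo b (fun x => lam * p x + (1 - lam) * q x)
      ≤ ∫ x, (lam * f x + (1 - lam) * g x) := hle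
    _ = lam * fisherInfo b p + (1 - lam) * fisherInfo b q := by
        rw [integral_add (hJp_int.const_mul lam) (hJq_int.const_mul (1 - lam)),
          integral_const_mul, integral_const_mul]
        rfl
end

section
/- Let b : ℝ → (0,∞) and let p_{XY} be a smooth, strictly positive joint probability density on ℝ² with marginals p_X, p_Y and conditionals p_{Y|X}(y|x) = p_{XY}(x,y)/p_X(x), p_{X|Y}(x|y) = p_{XY}(x,y)/p_Y(y); assume all integrals below are finite and differentiation under the integral sign in y is justified. Then the mutual Fisher information equals the statistical Fisher information: ∫∫ b(y) p_{XY}(x,y) ((∂/∂y) log p_{Y|X}(y|x))² dx dy − ∫ b(y) p_Y(y) ((∂/∂y) log p_Y(y))² dy = ∫ p_Y(y) b(y) ∫ p_{X|Y}(x|y) ((∂/∂y) log p_{X|Y}(x|y))² dx dy; that is, J_b(X;Y) = Φ_b(X|Y). -/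
open MeasureTheory Real Filter

/-- **Mutual Fisher information equals statistical Fisher information**
(`J_b(X;Y) = Φ_b(X|Y)`): for a smooth strictly positive joint density `pXY` with
marginals `pX, pY` and conditionals `p_{Y|X} = pXY/pX`, `p_{X|Y} = pXY/pY`,
`J_b(Y|X) - J_b(Y) = ∫ pY(y) b(y) ∫ p_{X|Y}(x|y) (∂_y log p_{X|Y}(x|y))² dx dy`. -/
theorem mutualFisherInfo_eq_statFisherInfo
    (b : ℝ → ℝ) (hb_meas : Measurable b) (hb_pos : ∀ y, 0 < b y)
    (pXY : ℝ → ℝ → ℝ)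
    (h_smooth : ContDiff ℝ (⊤ : ℕ∞) (fun q : ℝ × ℝ => pXY q.1 q.2))
    (h_pos : ∀ x y, 0 < pXY x y)
    (h_int : Integrable (fun q : ℝ × ℝ => pXY q.1 q.2))
    (h_density : ∫ q : ℝ × ℝ, pXY q.1 q.2 = 1)
    (hsliceX : ∀ x, Integrable (fun y => pXY x y))
    (hsliceY : ∀ y, Integrable (fun x => pXY x y))
    (pX pY : ℝ → ℝ)
    (hpX : ∀ x, pX x = ∫ y, pXY x y)
    (hpY : ∀ y, pY y = ∫ x, pXY x y)
    -- differentiation under the integral sign in `y` is justified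
    (hDUI : ∀ y, HasDerivAt (fun y' => ∫ x, pXY x y')
      (∫ x, deriv (fun y' => pXY x y') y) y)
    -- all integrals below are finite
    (hJcond_inner_int : ∀ y, Integrable (fun x =>
      b y * pXY x y * (deriv (fun y' => Real.log (pXY x y' / pX x)) y) ^ 2))
    (hJcond_int : Integrable (fun y =>
      ∫ x, b y * pXY x y * (deriv (fun y' => Real.log (pXY x y' / pX x)) y) ^ 2))
    (hJY_int : Integrable (fun y =>
      b y * pY y * (deriv (fun y' => Real.log (pY y')) y) ^ 2))
    (hPhi_inner_int : ∀ y, Integrable (fun x =>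
      (pXY x y / pY y) * (deriv (fun y' => Real.log (pXY x y' / pY y')) y) ^ 2))
    (hPhi_int : Integrable (fun y => pY y * b y *
      ∫ x, (pXY x y / pY y) * (deriv (fun y' => Real.log (pXY x y' / pY y')) y) ^ 2)) :
    (∫ y, ∫ x, b y * pXY x y * (deriv (fun y' => Real.log (pXY x y' / pX x)) y) ^ 2)
      - ∫ y, b y * pY y * (deriv (fun y' => Real.log (pY y')) y) ^ 2
    = ∫ y, pY y * b y *
        ∫ x, (pXY x y / pY y) * (deriv (fun y' => Real.log (pXY x y' / pY y')) y) ^ 2 := by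

  -- notation
  set F : ℝ × ℝ → ℝ := fun q => pXY q.1 q.2 with hF_def
  have hF : ContDiff ℝ (⊤ : ℕ∞) F := h_smooth
  -- positivity of marginals
  have int_pos : ∀ f : ℝ → ℝ, Integrable f → (∀ x, 0 < f x) → 0 < ∫ x, f x := by
    intro f hf h0
    rw [integral_pos_iff_support_of_nonneg (fun x => (h0 x).le) hf]
    have : Function.support f = Set.univ := Set.eq_univ_of_forall (fun x => (h0 x).ne')
    simp [this]
  have hpYpos : ∀ y, 0 < pY y := fun y => (hpY y) ▸ int_pos _ (hsliceY y) (fun x => h_pos x y)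
  have hpXpos : ∀ x, 0 < pX x := fun x => (hpX x) ▸ int_pos _ (hsliceX x) (fun y => h_pos x y)
  -- partial derivative in y
  have hfd : ∀ x y, HasDerivAt (fun y' => pXY x y') ((fderiv ℝ F (x, y)) (0, 1)) y := by
    intro x y
    have h1 : HasFDerivAt F (fderiv ℝ F (x, y)) (x, y) := (hF.differentiable (by simp) (x, y)).hasFDerivAt
    have h2 : HasDerivAt (fun y' : ℝ => ((x : ℝ), y')) ((0 : ℝ), (1 : ℝ)) y :=
      (hasDerivAt_const y x).prodMk (hasDerivAt_id y)
    exact h1.comp_hasDerivAt y h2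
  set d : ℝ → ℝ → ℝ := fun x y => deriv (fun y' => pXY x y') y with hd_def
  have hderiv : ∀ x y, HasDerivAt (fun y' => pXY x y') (d x y) y := by
    intro x y
    have := (hfd x y).deriv
    simpa [hd_def, this] using hfd x y
  have hd_cont : ∀ y, Continuous fun x => d x y := by
    intro y
    have : (fun x => d x y) = fun x => (fderiv ℝ F (x, y)) (0, 1) :=
      funext fun x => (hfd x y).deriv
    rw [this]
    exact ((hF.continuous_fderiv (by simp)).comp (continuous_id.prodMk continuous_const)).clm_apply
      continuous_const
  -- derivative of pY
  set D : ℝ → ℝ := fun y => ∫ x, d x y with hD_def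
  have hpY_fun : pY = fun y => ∫ x, pXY x y := funext hpY
  have hpYd : ∀ y, HasDerivAt pY (D y) y := by
    intro y; rw [hpY_fun]; exact hDUI y
  -- the three log-derivative computations
  have hlogY : ∀ y, deriv (fun y' => Real.log (pY y')) y = D y / pY y := fun y =>
    ((hpYd y).log (hpYpos y).ne').deriv
  have hlogYX : ∀ x y, deriv (fun y' => Real.log (pXY x y' / pX x)) y = d x y / pXY x y := by
    intro x y
    have e : (fun y' => Real.log (pXY x y' / pX x))
        = fun y' => Real.log (pXY x y') - Real.log (pX x) :=
      funext fun y' => Real.log_div (h_pos x y').ne' (hpXpos x).ne'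
    rw [e]
    have h1 : HasDerivAt (fun y' => Real.log (pXY x y')) (d x y / pXY x y) y :=
      (hderiv x y).log (h_pos x y).ne'
    simpa using (h1.sub_const (Real.log (pX x))).deriv
  have hlogXY : ∀ x y, deriv (fun y' => Real.log (pXY x y' / pY y')) y
      = d x y / pXY x y - D y / pY y := by
    intro x y
    have e : (fun y' => Real.log (pXY x y' / pY y'))
        = fun y' => Real.log (pXY x y') - Real.log (pY y') :=
      funext fun y' => Real.log_div (h_pos x y').ne' (hpYpos y').ne'
    rw [e]
    have h1 : HasDerivAt (fun y' => Real.log (pXY x y')) (d x y / pXY x y) y :=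
      (hderiv x y).log (h_pos x y).ne'
    have h2 : HasDerivAt (fun y' => Real.log (pY y')) (D y / pY y) y :=
      (hpYd y).log (hpYpos y).ne'
    exact (h1.sub h2).deriv
  -- pointwise-in-y key identity
  have key : ∀ y, pY y * b y *
      ∫ x, (pXY x y / pY y) * (deriv (fun y' => Real.log (pXY x y' / pY y')) y) ^ 2
      = (∫ x, b y * pXY x y * (deriv (fun y' => Real.log (pXY x y' / pX x)) y) ^ 2)
        - b y * pY y * (deriv (fun y' => Real.log (pY y')) y) ^ 2 := by
    intro y
    set c := pY y with hc_def
    have hc : 0 < c := hpYpos y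
    set v := D y / c with hv_def
    set w : ℝ → ℝ := fun x => d x y / pXY x y with hw_def
    have hdw : ∀ x, d x y = pXY x y * w x := by
      intro x
      rw [hw_def]
      rw [mul_comm, div_mul_cancel₀ _ (h_pos x y).ne']
    -- integrability of pXY * w ^ 2
    have I1 : Integrable fun x => pXY x y * w x ^ 2 := by
      have h := hJcond_inner_int y
      have e : (fun x => b y * pXY x y * (deriv (fun y' => Real.log (pXY x y' / pX x)) y) ^ 2)
          = fun x => b y * (pXY x y * w x ^ 2) := by
        funext x; rw [hlogYX x y]; ring
      rw [e] at h
      have := h.const_mul (b y)⁻¹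
      simpa [inv_mul_cancel_left₀ (hb_pos y).ne'] using this
    -- integrability of d
    have Id : Integrable fun x => d x y := by
      have hm : AEStronglyMeasurable (fun x => d x y) volume := (hd_cont y).aestronglyMeasurable
      refine Integrable.mono' (((I1.add (hsliceY y)).const_mul (1/2))) hm ?_
      refine Filter.Eventually.of_forall fun x => ?_
      have hp := h_pos x y
      simp only [Pi.add_apply]
      rw [hdw x, Real.norm_eq_abs, abs_le]
      constructor <;> nlinarith [sq_nonneg (w x - 1), sq_nonneg (w x + 1), hp.le,
        mul_nonneg hp.le (sq_nonneg (w x - 1)), mul_nonneg hp.le (sq_nonneg (w x + 1))]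
    -- compute the integral ∫ pXY (w - v)²
    have expand : (fun x => pXY x y * (w x - v) ^ 2)
        = fun x => (pXY x y * w x ^ 2 - (2 * v) * d x y) + v ^ 2 * pXY x y := by
      funext x; rw [hdw x]; ring
    have hint1 : ∫ x, pXY x y * (w x - v) ^ 2
        = (∫ x, pXY x y * w x ^ 2) - 2 * v * D y + v ^ 2 * c := by
      have ia : Integrable (fun x => pXY x y * w x ^ 2 - 2 * v * d x y) :=
        I1.sub (Id.const_mul (2 * v))
      have ib : Integrable (fun x => v ^ 2 * pXY x y) := (hsliceY y).const_mul (v ^ 2)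
      rw [expand]
      rw [integral_add ia ib, integral_sub I1 (Id.const_mul (2 * v)),
        integral_const_mul, integral_const_mul, hc_def, hpY y]
    -- rewrite both sides
    have eL : (fun x => (pXY x y / c) * (deriv (fun y' => Real.log (pXY x y' / pY y')) y) ^ 2)
        = fun x => c⁻¹ * (pXY x y * (w x - v) ^ 2) := by
      funext x; rw [hlogXY x y]
      rw [hv_def, hw_def]
      rw [← hc_def]
      field_simp
    have eA : (fun x => b y * pXY x y * (deriv (fun y' => Real.log (pXY x y' / pX x)) y) ^ 2)
        = fun x => b y * (pXY x y * w x ^ 2) := by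
      funext x; rw [hlogYX x y]; ring
    rw [eL, eA, integral_const_mul, integral_const_mul, hint1, hlogY y]
    have hD : D y = v * c := by rw [hv_def]; field_simp
    rw [hD]
    rw [← hc_def]
    field_simp
    ring
  -- conclude
  have eRHS : (fun y => pY y * b y *
      ∫ x, (pXY x y / pY y) * (deriv (fun y' => Real.log (pXY x y' / pY y')) y) ^ 2)
      = fun y => (∫ x, b y * pXY x y * (deriv (fun y' => Real.log (pXY x y' / pX x)) y) ^ 2)
        - b y * pY y * (deriv (fun y' => Real.log (pY y')) y) ^ 2 := funext key
  rw [eRHS, integral_sub hJcond_int hJY_int]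
end

section
/- Let b : ℝ → (0,∞) and let p_{XY} be a smooth, strictly positive joint probability density on ℝ² with marginals p_X, p_Y and conditional p_{Y|X}(y|x) = p_{XY}(x,y)/p_X(x); let φ(x,y) = (∂/∂y) log p_{Y|X}(y|x) be the pointwise score. Assume all integrals below are finite and differentiation under the integral sign in y is justified. Then ∫∫ b(y) p_{XY}(x,y) ( φ(x,y) − (∂/∂y) log p_Y(y) )² dx dy = J_b(Y|X) − J_b(Y), and for every measurable T : ℝ → ℝ, ∫∫ b(y) p_{XY}(x,y) (T(y) − φ(x,y))² dx dy ≥ J_b(Y|X) − J_b(Y). Hence the mutual Fisher information equals the minimum mean square error in estimating φ(X,Y) from Y with weight b: J_b(X;Y) = mmse_b(φ(X,Y) | Y). -/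
open MeasureTheory Real Filter

/-- **Mutual Fisher information as an mmse** (`J_b(X;Y) = mmse_b(φ(X,Y)|Y)`).
With `φ(x,y) = ∂_y log p_{Y|X}(y|x)` the pointwise score, the weighted mean square
error of the conditional-expectation estimator `∂_y log pY(y)` equals
`J_b(Y|X) - J_b(Y)`, and every measurable estimator `T(y)` of `φ(x,y)` has weighted
mean square error at least `J_b(Y|X) - J_b(Y)`. -/
theorem mutualFisherInfo_eq_mmse
    (b : ℝ → ℝ) (hb_meas : Measurable b) (hb_pos : ∀ y, 0 < b y)
    (pXY : ℝ → ℝ → ℝ)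
    (h_smooth : ContDiff ℝ (⊤ : ℕ∞) (fun q : ℝ × ℝ => pXY q.1 q.2))
    (h_pos : ∀ x y, 0 < pXY x y)
    (h_int : Integrable (fun q : ℝ × ℝ => pXY q.1 q.2))
    (h_density : ∫ q : ℝ × ℝ, pXY q.1 q.2 = 1)
    (hsliceX : ∀ x, Integrable (fun y => pXY x y))
    (hsliceY : ∀ y, Integrable (fun x => pXY x y))
    (pX pY : ℝ → ℝ)
    (hpX : ∀ x, pX x = ∫ y, pXY x y)
    (hpY : ∀ y, pY y = ∫ x, pXY x y)
    -- differentiation under the integral sign in `y` is justified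
    (hDUI : ∀ y, HasDerivAt (fun y' => ∫ x, pXY x y')
      (∫ x, deriv (fun y' => pXY x y') y) y)
    -- the conditional and marginal generalized Fisher informations, assumed finite
    (JYX JY : ℝ)
    (hJYX : JYX = ∫ y, ∫ x,
      b y * pXY x y * (deriv (fun y' => Real.log (pXY x y' / pX x)) y) ^ 2)
    (hJY : JY = ∫ y, b y * pY y * (deriv (fun y' => Real.log (pY y')) y) ^ 2)
    (hJYX_inner_int : ∀ y, Integrable (fun x =>
      b y * pXY x y * (deriv (fun y' => Real.log (pXY x y' / pX x)) y) ^ 2))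
    (hJYX_int : Integrable (fun y => ∫ x,
      b y * pXY x y * (deriv (fun y' => Real.log (pXY x y' / pX x)) y) ^ 2))
    (hJY_int : Integrable (fun y =>
      b y * pY y * (deriv (fun y' => Real.log (pY y')) y) ^ 2))
    (hmse_inner_int : ∀ y, Integrable (fun x => b y * pXY x y *
      (deriv (fun y' => Real.log (pXY x y' / pX x)) y
        - deriv (fun y' => Real.log (pY y')) y) ^ 2))
    (hmse_int : Integrable (fun y => ∫ x, b y * pXY x y *
      (deriv (fun y' => Real.log (pXY x y' / pX x)) y
        - deriv (fun y' => Real.log (pY y')) y) ^ 2)) :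
    ((∫ y, ∫ x, b y * pXY x y *
        (deriv (fun y' => Real.log (pXY x y' / pX x)) y
          - deriv (fun y' => Real.log (pY y')) y) ^ 2)
      = JYX - JY) ∧
    (∀ T : ℝ → ℝ, Measurable T →
      ENNReal.ofReal (JYX - JY) ≤
        ∫⁻ y, ∫⁻ x, ENNReal.ofReal (b y * pXY x y *
          (T y - deriv (fun y' => Real.log (pXY x y' / pX x)) y) ^ 2)) := by

  -- positivity of the marginals
  have hpX_pos : ∀ x, 0 < pX x := by
    intro x
    rw [hpX x, integral_pos_iff_support_of_nonneg (fun y => (h_pos x y).le) (hsliceX x)]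
    have h1 : Function.support (fun y => pXY x y) = Set.univ := by
      ext y; simp [Function.mem_support, (h_pos x y).ne']
    rw [h1]
    simp
  have hpY_pos : ∀ y, 0 < pY y := by
    intro y
    rw [hpY y, integral_pos_iff_support_of_nonneg (fun x => (h_pos x y).le) (hsliceY y)]
    have h1 : Function.support (fun x => pXY x y) = Set.univ := by
      ext x; simp [Function.mem_support, (h_pos x y).ne']
    rw [h1]
    simp
  -- differentiability of the slices y ↦ pXY x y
  have hdiffAt : ∀ x y, DifferentiableAt ℝ (fun y' => pXY x y') y := by
    intro x y
    have h1 : DifferentiableAt ℝ (fun q : ℝ × ℝ => pXY q.1 q.2) (x, y) :=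
      (h_smooth.differentiable (by simp)).differentiableAt
    have h2 : DifferentiableAt ℝ (fun y' => ((x, y') : ℝ × ℝ)) y :=
      (differentiableAt_const x).prodMk differentiableAt_id
    exact h1.comp y h2
  have hD : ∀ x y, HasDerivAt (fun y' => pXY x y') (deriv (fun y' => pXY x y') y) y :=
    fun x y => (hdiffAt x y).hasDerivAt
  -- representation of the partial derivative via the full fderiv (for continuity)
  have hDrep : ∀ y x, deriv (fun y' => pXY x y') y
      = (fderiv ℝ (fun q : ℝ × ℝ => pXY q.1 q.2) (x, y)) (0, 1) := by
    intro y x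
    have h1 : HasFDerivAt (fun q : ℝ × ℝ => pXY q.1 q.2)
        (fderiv ℝ (fun q : ℝ × ℝ => pXY q.1 q.2) (x, y)) (x, y) :=
      ((h_smooth.differentiable (by simp)) (x, y)).hasFDerivAt
    have h2 : HasDerivAt (fun y' => ((x, y') : ℝ × ℝ)) (((0 : ℝ), (1 : ℝ))) y :=
      (hasDerivAt_const y x).prodMk (hasDerivAt_id y)
    exact (h1.comp_hasDerivAt y h2).deriv
  have hcontP : ∀ y, Continuous fun x => pXY x y := fun y =>
    h_smooth.continuous.comp (continuous_id.prodMk continuous_const)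
  have hcontD : ∀ y, Continuous fun x => deriv (fun y' => pXY x y') y := by
    intro y
    have h1 : Continuous fun x : ℝ =>
        (fderiv ℝ (fun q : ℝ × ℝ => pXY q.1 q.2) (x, y)) (((0 : ℝ), (1 : ℝ))) :=
      (((h_smooth.continuous_fderiv (by simp)).comp
        (continuous_id.prodMk continuous_const)).clm_apply continuous_const)
    exact h1.congr fun x => (hDrep y x).symm
  -- formula for the conditional score
  have hphi : ∀ x y, deriv (fun y' => Real.log (pXY x y' / pX x)) y
      = deriv (fun y' => pXY x y') y / pXY x y := by
    intro x y
    have h1 : HasDerivAt (fun y' => pXY x y' / pX x)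
        (deriv (fun y' => pXY x y') y / pX x) y := (hD x y).div_const _
    have h2 := h1.log (div_ne_zero (h_pos x y).ne' (hpX_pos x).ne')
    rw [h2.deriv]
    field_simp [(h_pos x y).ne', (hpX_pos x).ne']
  -- derivative of pY
  have hpYfun : pY = fun y' => ∫ x, pXY x y' := funext hpY
  have hpYd : ∀ y, HasDerivAt pY (∫ x, deriv (fun y' => pXY x y') y) y := by
    intro y
    rw [hpYfun]
    exact hDUI y
  have hS : ∀ y, deriv (fun y' => Real.log (pY y')) y
      = (∫ x, deriv (fun y' => pXY x y') y) / pY y := by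
    intro y
    exact ((hpYd y).log (hpY_pos y).ne').deriv
  have hsPY : ∀ y, deriv (fun y' => Real.log (pY y')) y * pY y
      = ∫ x, deriv (fun y' => pXY x y') y := by
    intro y
    rw [hS y]
    field_simp [(hpY_pos y).ne']
  -- integrability of the unweighted squared deviation
  have hIntmse' : ∀ y, Integrable (fun x => pXY x y *
      (deriv (fun y' => pXY x y') y / pXY x y
        - deriv (fun y' => Real.log (pY y')) y) ^ 2) := by
    intro y
    have h1 := (hmse_inner_int y).const_mul (b y)⁻¹
    refine h1.congr (Eventually.of_forall fun x => ?_)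
    simp only [hphi]
    field_simp [(h_pos x y).ne', (hb_pos y).ne']
  have hcontU : ∀ y, Continuous (fun x => pXY x y *
      (deriv (fun y' => pXY x y') y / pXY x y
        - deriv (fun y' => Real.log (pY y')) y)) := by
    intro y
    exact (hcontP y).mul
      (((hcontD y).div (hcontP y) fun x => (h_pos x y).ne').sub continuous_const)
  have hIntg : ∀ y, Integrable (fun x => pXY x y *
      (deriv (fun y' => pXY x y') y / pXY x y
        - deriv (fun y' => Real.log (pY y')) y)) := by
    intro y
    refine Integrable.mono' (((hsliceY y).add (hIntmse' y)).div_const 2)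
      (hcontU y).aestronglyMeasurable (Eventually.of_forall fun x => ?_)
    have h2 : (0:ℝ) ≤ 1 + (deriv (fun y' => pXY x y') y / pXY x y
        - deriv (fun y' => Real.log (pY y')) y) ^ 2
        - 2 * |deriv (fun y' => pXY x y') y / pXY x y
          - deriv (fun y' => Real.log (pY y')) y| := by
      nlinarith [sq_nonneg (|deriv (fun y' => pXY x y') y / pXY x y
        - deriv (fun y' => Real.log (pY y')) y| - 1),
        sq_abs (deriv (fun y' => pXY x y') y / pXY x y
          - deriv (fun y' => Real.log (pY y')) y)]
    simp only [Pi.add_apply]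
    rw [Real.norm_eq_abs, abs_mul, abs_of_nonneg (h_pos x y).le]
    nlinarith [mul_nonneg (h_pos x y).le h2]
  have hIntD : ∀ y, Integrable (fun x => deriv (fun y' => pXY x y') y) := by
    intro y
    have h1 : (fun x => deriv (fun y' => pXY x y') y)
        = fun x => pXY x y * (deriv (fun y' => pXY x y') y / pXY x y
            - deriv (fun y' => Real.log (pY y')) y)
          + deriv (fun y' => Real.log (pY y')) y * pXY x y := by
      funext x
      field_simp [(h_pos x y).ne']
      ring
    rw [h1]
    exact (hIntg y).add ((hsliceY y).const_mul _)
  have hzero : ∀ y, (∫ x, pXY x y * (deriv (fun y' => pXY x y') y / pXY x y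
      - deriv (fun y' => Real.log (pY y')) y)) = 0 := by
    intro y
    have h1 : (fun x => pXY x y * (deriv (fun y' => pXY x y') y / pXY x y
        - deriv (fun y' => Real.log (pY y')) y))
        = fun x => deriv (fun y' => pXY x y') y
          - deriv (fun y' => Real.log (pY y')) y * pXY x y := by
      funext x
      field_simp [(h_pos x y).ne']
    rw [h1, integral_sub (hIntD y) ((hsliceY y).const_mul _), integral_const_mul,
      ← hpY y, ← hsPY y]
    ring
  -- pointwise-in-y identity (part 1, per slice)
  have part1 : ∀ y, (∫ x, b y * pXY x y *
      (deriv (fun y' => Real.log (pXY x y' / pX x)) y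
        - deriv (fun y' => Real.log (pY y')) y) ^ 2)
      = (∫ x, b y * pXY x y *
          (deriv (fun y' => Real.log (pXY x y' / pX x)) y) ^ 2)
        - b y * pY y * (deriv (fun y' => Real.log (pY y')) y) ^ 2 := by
    intro y
    have h2 := hsPY y
    set s := deriv (fun y' => Real.log (pY y')) y with hs
    have e1 : (fun x => b y * pXY x y *
        (deriv (fun y' => Real.log (pXY x y' / pX x)) y - s) ^ 2)
        = fun x => (b y * pXY x y *
            (deriv (fun y' => Real.log (pXY x y' / pX x)) y) ^ 2
          - 2 * (b y * s) * deriv (fun y' => pXY x y') y)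
          + b y * s ^ 2 * pXY x y := by
      funext x
      rw [hphi]
      have hp := (h_pos x y).ne'
      field_simp
      ring
    have hAB : Integrable (fun x => b y * pXY x y *
        (deriv (fun y' => Real.log (pXY x y' / pX x)) y) ^ 2
        - 2 * (b y * s) * deriv (fun y' => pXY x y') y) :=
      (hJYX_inner_int y).sub ((hIntD y).const_mul _)
    have hC : Integrable (fun x => b y * s ^ 2 * pXY x y) := (hsliceY y).const_mul _
    rw [e1, integral_add hAB hC,
      integral_sub (hJYX_inner_int y) ((hIntD y).const_mul _),
      integral_const_mul, integral_const_mul, ← hpY y]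
    linear_combination (2 * b y * s) * h2
  have hEq : (∫ y, ∫ x, b y * pXY x y *
      (deriv (fun y' => Real.log (pXY x y' / pX x)) y
        - deriv (fun y' => Real.log (pY y')) y) ^ 2) = JYX - JY := by
    rw [hJYX, hJY, ← integral_sub hJYX_int hJY_int]
    exact integral_congr_ae (Eventually.of_forall fun y => part1 y)
  refine ⟨hEq, ?_⟩
  intro T hT
  rw [← hEq,
    MeasureTheory.ofReal_integral_eq_lintegral_ofReal hmse_int
      (Eventually.of_forall fun y => integral_nonneg fun x =>
        mul_nonneg (mul_nonneg (hb_pos y).le (h_pos x y).le) (sq_nonneg _))]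
  refine lintegral_mono fun y => ?_
  by_cases hfin : (∫⁻ x, ENNReal.ofReal (b y * pXY x y *
      (T y - deriv (fun y' => Real.log (pXY x y' / pX x)) y) ^ 2)) = ⊤
  · rw [hfin]; exact le_top
  · have hcontg : Continuous fun x => b y * pXY x y *
        (T y - deriv (fun y' => Real.log (pXY x y' / pX x)) y) ^ 2 := by
      have h1 : Continuous fun x =>
          deriv (fun y' => Real.log (pXY x y' / pX x)) y := by
        have h0 := (hcontD y).div (hcontP y) fun x => (h_pos x y).ne'
        exact h0.congr fun x => (hphi x y).symm
      exact (continuous_const.mul (hcontP y)).mul ((continuous_const.sub h1).pow 2)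
    have hgnn : ∀ x, 0 ≤ b y * pXY x y *
        (T y - deriv (fun y' => Real.log (pXY x y' / pX x)) y) ^ 2 :=
      fun x => mul_nonneg (mul_nonneg (hb_pos y).le (h_pos x y).le) (sq_nonneg _)
    have hIntgT : Integrable (fun x => b y * pXY x y *
        (T y - deriv (fun y' => Real.log (pXY x y' / pX x)) y) ^ 2) := by
      refine ⟨hcontg.aestronglyMeasurable, ?_⟩
      rw [hasFiniteIntegral_iff_ofReal (Eventually.of_forall hgnn)]
      exact lt_top_iff_ne_top.mpr hfin
    rw [← MeasureTheory.ofReal_integral_eq_lintegral_ofReal hIntgT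
      (Eventually.of_forall hgnn)]
    apply ENNReal.ofReal_le_ofReal
    have hIg := hIntg y
    have hz := hzero y
    have hmseI := hmse_inner_int y
    set s := deriv (fun y' => Real.log (pY y')) y with hs
    have e2 : (fun x => b y * pXY x y *
        (T y - deriv (fun y' => Real.log (pXY x y' / pX x)) y) ^ 2)
        = fun x => ((b y * (T y - s) ^ 2) * pXY x y
            - (2 * (b y * (T y - s))) *
              (pXY x y * (deriv (fun y' => pXY x y') y / pXY x y - s)))
          + b y * pXY x y *
            (deriv (fun y' => Real.log (pXY x y' / pX x)) y - s) ^ 2 := by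
      funext x
      rw [hphi]
      ring
    have hAB2 : Integrable (fun x => b y * (T y - s) ^ 2 * pXY x y
        - 2 * (b y * (T y - s)) *
          (pXY x y * (deriv (fun y' => pXY x y') y / pXY x y - s))) :=
      ((hsliceY y).const_mul _).sub (hIg.const_mul _)
    rw [e2, integral_add hAB2 hmseI,
      integral_sub ((hsliceY y).const_mul _) (hIg.const_mul _),
      integral_const_mul, integral_const_mul, hz, ← hpY y]
    nlinarith [mul_nonneg (mul_nonneg (hb_pos y).le (sq_nonneg (T y - s)))
      (hpY_pos y).le]
end

section
/- Let a, b : ℝ × [0,∞) → ℝ be smooth with b > 0, and let p(x,t) be a smooth, strictly positive time-dependent probability density solving the Fokker–Planck equation ∂p/∂t = −∂/∂x(a p) + (1/2)∂²/∂x²(b p). Assume p and its derivatives decay rapidly enough at infinity that all integrals below converge, differentiation under the integral sign is valid, and integration by parts incurs no boundary terms. Then the Shannon entropy H(t) = −∫_ℝ p(x,t) log p(x,t) dx satisfies dH/dt = (1/2) ∫_ℝ b(x,t) (∂p(x,t)/∂x)² / p(x,t) dx + ∫_ℝ p(x,t) ( ∂a(x,t)/∂x − (1/2) ∂²b(x,t)/∂x²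 ) dx; i.e., dH/dt = (1/2) J_{b_t}(X_t) + E[∂_x a(X_t,t) − (1/2) ∂²_x b(X_t,t)]. -/
open MeasureTheory Real Filter

/-- FTC on the whole line: if `f` has derivative `f'` everywhere, `f'` is integrable,
and `f` tends to `0` at both ends, then `∫ f' = 0`. -/
lemma integral_deriv_zero_of_tendsto (f f' : ℝ → ℝ)
    (hderiv : ∀ x, HasDerivAt f (f' x) x)
    (hint : Integrable f') (htop : Tendsto f atTop (nhds 0))
    (hbot : Tendsto f atBot (nhds 0)) : ∫ x, f' x = 0 := by
  have h1 : ∫ x in Set.Ioi (0:ℝ), f' x = 0 - f 0 :=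
    integral_Ioi_of_hasDerivAt_of_tendsto' (fun x _ => hderiv x) hint.integrableOn htop
  have h2 : ∫ x in Set.Iic (0:ℝ), f' x = f 0 - 0 :=
    integral_Iic_of_hasDerivAt_of_tendsto' (fun x _ => hderiv x) hint.integrableOn hbot
  rw [← intervalIntegral.integral_Iic_add_Ioi (b := (0:ℝ)) hint.integrableOn hint.integrableOn, h1, h2]
  ring

/-- **Generalized De Bruijn identity for Fokker–Planck channels.**
If `p(x,t)` is a smooth strictly positive probability density solving
`∂p/∂t = -∂/∂x(a p) + (1/2)∂²/∂x²(b p)`, then the Shannon entropy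
`H(t) = -∫ p log p` satisfies
`dH/dt = (1/2)∫ b p'²/p + ∫ p (∂ₓa - (1/2)∂ₓ²b)`. -/
theorem entropy_deriv_fokker_planck
    (a b p : ℝ → ℝ → ℝ)
    (ha_smooth : ContDiff ℝ (⊤ : ℕ∞) (fun q : ℝ × ℝ => a q.1 q.2))
    (hb_smooth : ContDiff ℝ (⊤ : ℕ∞) (fun q : ℝ × ℝ => b q.1 q.2))
    (hb_pos : ∀ x t, 0 ≤ t → 0 < b x t)
    (hp_smooth : ContDiff ℝ (⊤ : ℕ∞) (fun q : ℝ × ℝ => p q.1 q.2))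
    (hp_pos : ∀ x t, 0 ≤ t → 0 < p x t)
    (hp_int : ∀ t, 0 ≤ t → Integrable (fun x => p x t))
    (hp_density : ∀ t, 0 ≤ t → ∫ x, p x t = 1)
    -- the Fokker–Planck equation
    (hFP : ∀ x t, 0 ≤ t →
      deriv (fun s => p x s) t
        = -(deriv (fun y => a y t * p y t) x)
          + (1 / 2) * deriv (fun y => deriv (fun z => b z t * p z t) y) x)
    -- all integrals below converge
    (hent_int : ∀ t, 0 ≤ t → Integrable (fun x => p x t * Real.log (p x t)))
    (hent_t_int : ∀ t, 0 ≤ t →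
      Integrable (fun x => deriv (fun s => p x s * Real.log (p x s)) t))
    (hJ_int : ∀ t, 0 ≤ t →
      Integrable (fun x => b x t * (deriv (fun y => p y t) x) ^ 2 / p x t))
    (hdrift_int : ∀ t, 0 ≤ t → Integrable (fun x => p x t *
      (deriv (fun y => a y t) x - (1 / 2) * deriv (fun y => deriv (fun z => b z t) y) x)))
    (hap_int : ∀ t, 0 ≤ t → Integrable (fun x => a x t * deriv (fun y => p y t) x))
    (hbp_int : ∀ t, 0 ≤ t →
      Integrable (fun x => b x t * deriv (fun y => deriv (fun z => p z t) y) x))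
    -- differentiation under the integral sign is valid
    (hDUI : ∀ t, 0 ≤ t →
      HasDerivAt (fun s => ∫ x, p x s * Real.log (p x s))
        (∫ x, deriv (fun s => p x s * Real.log (p x s)) t) t)
    -- integration by parts incurs no boundary terms
    (hbd₁ : ∀ t, 0 ≤ t → Tendsto (fun x => a x t * p x t * Real.log (p x t)) atTop (nhds 0)
      ∧ Tendsto (fun x => a x t * p x t * Real.log (p x t)) atBot (nhds 0))
    (hbd₂ : ∀ t, 0 ≤ t → Tendsto (fun x => a x t * p x t) atTop (nhds 0)
      ∧ Tendsto (fun x => a x t * p x t) atBot (nhds 0))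
    (hbd₃ : ∀ t, 0 ≤ t →
      Tendsto (fun x => deriv (fun y => b y t * p y t) x * Real.log (p x t)) atTop (nhds 0)
      ∧ Tendsto (fun x => deriv (fun y => b y t * p y t) x * Real.log (p x t)) atBot (nhds 0))
    (hbd₄ : ∀ t, 0 ≤ t → Tendsto (fun x => b x t * deriv (fun y => p y t) x) atTop (nhds 0)
      ∧ Tendsto (fun x => b x t * deriv (fun y => p y t) x) atBot (nhds 0))
    (hbd₅ : ∀ t, 0 ≤ t → Tendsto (fun x => deriv (fun y => b y t) x * p x t) atTop (nhds 0)
      ∧ Tendsto (fun x => deriv (fun y => b y t) x * p x t) atBot (nhds 0)) :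
    ∀ t, 0 ≤ t →
      HasDerivAt (fun s => -∫ x, p x s * Real.log (p x s))
        ((1 / 2) * (∫ x, b x t * (deriv (fun y => p y t) x) ^ 2 / p x t)
          + ∫ x, p x t * (deriv (fun y => a y t) x
              - (1 / 2) * deriv (fun y => deriv (fun z => b z t) y) x)) t := by
  intro t ht
  -- smoothness of x-sections
  have hsec : ∀ (f : ℝ → ℝ → ℝ), ContDiff ℝ (⊤ : ℕ∞) (fun q : ℝ × ℝ => f q.1 q.2) →
      ContDiff ℝ (⊤ : ℕ∞) (fun x => f x t) := fun f hf =>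
    hf.comp (contDiff_id.prodMk contDiff_const)
  have hA : ContDiff ℝ (⊤ : ℕ∞) (fun x => a x t) := (hsec a ha_smooth).of_le (by simp)
  have hB : ContDiff ℝ (⊤ : ℕ∞) (fun x => b x t) := (hsec b hb_smooth).of_le (by simp)
  have hP : ContDiff ℝ (⊤ : ℕ∞) (fun x => p x t) := (hsec p hp_smooth).of_le (by simp)
  have hAd : Differentiable ℝ (fun x => a x t) := hA.differentiable (by simp)
  have hBd : Differentiable ℝ (fun x => b x t) := hB.differentiable (by simp)
  have hPd : Differentiable ℝ (fun x => p x t) := hP.differentiable (by simp)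
  have hAP : ContDiff ℝ (⊤ : ℕ∞) (fun x => a x t * p x t) := hA.mul hP
  have hBP : ContDiff ℝ (⊤ : ℕ∞) (fun x => b x t * p x t) := hB.mul hP
  -- derivatives of sections are smooth
  have hA' : ContDiff ℝ (⊤ : ℕ∞) (deriv (fun x => a x t)) := (contDiff_infty_iff_deriv.mp hA).2
  have hB' : ContDiff ℝ (⊤ : ℕ∞) (deriv (fun x => b x t)) := (contDiff_infty_iff_deriv.mp hB).2
  have hG : ContDiff ℝ (⊤ : ℕ∞) (deriv (fun x => b x t * p x t)) := (contDiff_infty_iff_deriv.mp hBP).2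
  have hPne : ∀ x, p x t ≠ 0 := fun x => ne_of_gt (hp_pos x t ht)
  -- notation
  set P' : ℝ → ℝ := deriv (fun y => p y t) with hP'def
  set A' : ℝ → ℝ := deriv (fun y => a y t) with hA'def
  set B' : ℝ → ℝ := deriv (fun y => b y t) with hB'def
  set G : ℝ → ℝ := deriv (fun z => b z t * p z t) with hGdef
  set G' : ℝ → ℝ := deriv G with hG'def
  set B'' : ℝ → ℝ := deriv B' with hB''def
  set F' : ℝ → ℝ := deriv (fun y => a y t * p y t) with hF'def
  -- expansion of G and F'
  have hGexp : ∀ x, G x = B' x * p x t + b x t * P' x := fun x => by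
    rw [hGdef, hB'def, hP'def]
    exact deriv_mul (hBd x) (hPd x)
  have hF'exp : ∀ x, F' x = A' x * p x t + a x t * P' x := fun x => by
    rw [hF'def, hA'def, hP'def]
    exact deriv_mul (hAd x) (hPd x)
  -- the integrand of the entropy derivative
  set W : ℝ → ℝ := fun x => deriv (fun s => p x s * Real.log (p x s)) t with hWdef
  -- time derivative of p at (x, t)
  set Pt : ℝ → ℝ := fun x => deriv (fun s => p x s) t with hPtdef
  -- chain rule: W x = Pt x * (log (p x t) + 1)
  have hW : ∀ x, W x = Pt x * (Real.log (p x t) + 1) := by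
    intro x
    have hψ : Differentiable ℝ (fun s => p x s) :=
      (hp_smooth.comp (contDiff_const.prodMk contDiff_id)).differentiable (by simp)
    have h1 : HasDerivAt (fun s => p x s) (Pt x) t := (hψ t).hasDerivAt
    have h2 : HasDerivAt Real.log (p x t)⁻¹ (p x t) := Real.hasDerivAt_log (hPne x)
    have h3 : HasDerivAt (fun s => Real.log (p x s)) ((p x t)⁻¹ * Pt x) t := h2.comp t h1
    have h4 : HasDerivAt (fun s => p x s * Real.log (p x s))
        (Pt x * Real.log (p x t) + p x t * ((p x t)⁻¹ * Pt x)) t := h1.mul h3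
    rw [hWdef]
    simp only []
    rw [h4.deriv]
    field_simp [hPne x]
  -- the "nice" part of the integrand
  set V : ℝ → ℝ := fun x => -(p x t * (A' x - (1 / 2) * B'' x))
      - (1 / 2) * (b x t * (P' x) ^ 2 / p x t) with hVdef
  have hVint : Integrable V := by
    have h1 := (hdrift_int t ht).neg
    have h2 := (hJ_int t ht).const_mul (1 / 2 : ℝ)
    exact h1.sub h2
  -- the potential whose derivative accounts for W - V
  set U : ℝ → ℝ := fun x => -(a x t * p x t * Real.log (p x t))
      + (1 / 2) * (G x * Real.log (p x t)) + (1 / 2) * G x - (1 / 2) * (B' x * p x t)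
    with hUdef
  -- pointwise derivative of U
  have hUderiv : ∀ x, HasDerivAt U (W x - V x) x := by
    intro x
    have hPx : HasDerivAt (fun y => p y t) (P' x) x := (hPd x).hasDerivAt
    have hAx : HasDerivAt (fun y => a y t) (A' x) x := (hAd x).hasDerivAt
    have hBx : HasDerivAt (fun y => b y t) (B' x) x := (hBd x).hasDerivAt
    have hGx : HasDerivAt G (G' x) x := ((hG.differentiable (by simp)) x).hasDerivAt
    have hB'x : HasDerivAt B' (B'' x) x := ((hB'.differentiable (by simp)) x).hasDerivAt
    have hlog : HasDerivAt (fun y => Real.log (p y t)) (P' x / p x t) x := by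
      have := (Real.hasDerivAt_log (hPne x)).comp x hPx
      simpa [div_eq_inv_mul, Function.comp_def] using this
    have hT1 : HasDerivAt (fun y => a y t * p y t * Real.log (p y t))
        ((A' x * p x t + a x t * P' x) * Real.log (p x t)
          + a x t * p x t * (P' x / p x t)) x := ((hAx.mul hPx).mul hlog)
    have hT2 : HasDerivAt (fun y => G y * Real.log (p y t))
        (G' x * Real.log (p x t) + G x * (P' x / p x t)) x := hGx.mul hlog
    have hT4 : HasDerivAt (fun y => B' y * p y t) (B'' x * p x t + B' x * P' x) x :=
      hB'x.mul hPx
    have hU : HasDerivAt U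
        (-((A' x * p x t + a x t * P' x) * Real.log (p x t)
            + a x t * p x t * (P' x / p x t))
          + (1 / 2) * (G' x * Real.log (p x t) + G x * (P' x / p x t))
          + (1 / 2) * G' x - (1 / 2) * (B'' x * p x t + B' x * P' x)) x :=
      ((hT1.neg.add (hT2.const_mul (1 / 2))).add (hGx.const_mul (1 / 2))).sub
        (hT4.const_mul (1 / 2))
    convert hU using 1
    have hWx := hW x
    have hFPx : Pt x = -(F' x) + (1 / 2) * G' x := hFP x t ht
    rw [hWx, hFPx]
    simp only [hVdef, hGexp, hF'exp]
    have hinv : p x t * (p x t)⁻¹ = 1 := mul_inv_cancel₀ (hPne x)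
    linear_combination ((a x t - (1 / 2) * B' x) * P' x) * hinv
  -- tendsto of U at ±∞
  have hGtop : Tendsto G atTop (nhds 0) := by
    have : G = fun x => B' x * p x t + b x t * P' x := funext hGexp
    rw [this]
    simpa using ((hbd₅ t ht).1.add (hbd₄ t ht).1)
  have hGbot : Tendsto G atBot (nhds 0) := by
    have : G = fun x => B' x * p x t + b x t * P' x := funext hGexp
    rw [this]
    simpa using ((hbd₅ t ht).2.add (hbd₄ t ht).2)
  have hUtop : Tendsto U atTop (nhds 0) := by
    have := (((hbd₁ t ht).1.neg.add ((hbd₃ t ht).1.const_mul (1 / 2))).add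
      (hGtop.const_mul (1 / 2))).sub ((hbd₅ t ht).1.const_mul (1 / 2))
    simpa [hUdef, mul_comm] using this
  have hUbot : Tendsto U atBot (nhds 0) := by
    have := (((hbd₁ t ht).2.neg.add ((hbd₃ t ht).2.const_mul (1 / 2))).add
      (hGbot.const_mul (1 / 2))).sub ((hbd₅ t ht).2.const_mul (1 / 2))
    simpa [hUdef, mul_comm] using this
  -- integrability of W - V and the vanishing integral
  have hWint : Integrable W := hent_t_int t ht
  have hWVint : Integrable (fun x => W x - V x) := hWint.sub hVint
  have hzero : ∫ x, (W x - V x) = 0 :=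
    integral_deriv_zero_of_tendsto U (fun x => W x - V x) hUderiv hWVint hUtop hUbot
  have hWV : ∫ x, W x = ∫ x, V x := by
    have := integral_sub hWint hVint
    rw [hzero] at this
    linarith [this]
  -- compute ∫ V
  have hVval : ∫ x, V x = -(∫ x, p x t * (A' x - (1 / 2) * B'' x))
      - (1 / 2) * (∫ x, b x t * (P' x) ^ 2 / p x t) := by
    have h1 : Integrable (fun x => -(p x t * (A' x - (1 / 2) * B'' x))) :=
      (hdrift_int t ht).neg
    have h2 : Integrable (fun x => (1 / 2) * (b x t * (P' x) ^ 2 / p x t)) :=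
      (hJ_int t ht).const_mul _
    calc ∫ x, V x
        = (∫ x, -(p x t * (A' x - (1 / 2) * B'' x)))
            - ∫ x, (1 / 2) * (b x t * (P' x) ^ 2 / p x t) := integral_sub h1 h2
      _ = _ := by rw [integral_neg, integral_const_mul]
  -- conclude
  have hfinal := (hDUI t ht).neg
  have : -(∫ x, W x) = (1 / 2) * (∫ x, b x t * (P' x) ^ 2 / p x t)
      + ∫ x, p x t * (A' x - (1 / 2) * B'' x) := by
    rw [hWV, hVval]; ring
  rw [← this]
  exact hfinal
end

section
/- Let a, b : ℝ × [0,∞) → ℝ be smooth with b > 0, and let p(x,t) and q(x,t) both be smooth, strictly positive time-dependent probability densities solving the Fokker–Planck equation ∂u/∂t = −∂/∂x(a u) + (1/2)∂²/∂x²(b u). Assume p, q and their derivatives decay rapidly enough at infinity that all integrals below converge, differentiation under the integral sign is valid, and integration by parts incurs no boundary terms. Then the KL divergence K(t) = ∫_ℝ p(x,t) log(p(x,t)/q(x,t)) dx satisfies dK/dt = −(1/2) ∫_ℝ p(x,t) b(x,t) ( ∂/∂x log(p(x,t)/q(x,t)) )² dx; i.e., d/dt K(p_t‖q_t) = −(1/2)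 J_{b_t}(p_t‖q_t) ≤ 0. -/
open MeasureTheory Real Filter

/-- **Decay of KL divergence along the Fokker–Planck flow.**
If `p(x,t)` and `q(x,t)` are smooth strictly positive probability densities solving
the same Fokker–Planck equation, then
`d/dt K(p_t‖q_t) = -(1/2) J_{b_t}(p_t‖q_t) ≤ 0`. -/
theorem kl_deriv_fokker_planck
    (a b p q : ℝ → ℝ → ℝ)
    (ha_smooth : ContDiff ℝ (⊤ : ℕ∞) (fun r : ℝ × ℝ => a r.1 r.2))
    (hb_smooth : ContDiff ℝ (⊤ : ℕ∞) (fun r : ℝ × ℝ => b r.1 r.2))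
    (hb_pos : ∀ x t, 0 ≤ t → 0 < b x t)
    (hp_smooth : ContDiff ℝ (⊤ : ℕ∞) (fun r : ℝ × ℝ => p r.1 r.2))
    (hp_pos : ∀ x t, 0 ≤ t → 0 < p x t)
    (hq_smooth : ContDiff ℝ (⊤ : ℕ∞) (fun r : ℝ × ℝ => q r.1 r.2))
    (hq_pos : ∀ x t, 0 ≤ t → 0 < q x t)
    (hp_int : ∀ t, 0 ≤ t → Integrable (fun x => p x t))
    (hp_density : ∀ t, 0 ≤ t → ∫ x, p x t = 1)
    (hq_int : ∀ t, 0 ≤ t → Integrable (fun x => q x t))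
    (hq_density : ∀ t, 0 ≤ t → ∫ x, q x t = 1)
    -- both solve the Fokker–Planck equation
    (hFPp : ∀ x t, 0 ≤ t →
      deriv (fun s => p x s) t
        = -(deriv (fun y => a y t * p y t) x)
          + (1 / 2) * deriv (fun y => deriv (fun z => b z t * p z t) y) x)
    (hFPq : ∀ x t, 0 ≤ t →
      deriv (fun s => q x s) t
        = -(deriv (fun y => a y t * q y t) x)
          + (1 / 2) * deriv (fun y => deriv (fun z => b z t * q z t) y) x)
    -- all integrals below converge
    (hKL_int : ∀ t, 0 ≤ t →
      Integrable (fun x => p x t * Real.log (p x t / q x t)))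
    (hKL_t_int : ∀ t, 0 ≤ t →
      Integrable (fun x => deriv (fun s => p x s * Real.log (p x s / q x s)) t))
    (hJrel_int : ∀ t, 0 ≤ t → Integrable (fun x =>
      p x t * b x t * (deriv (fun y => Real.log (p y t / q y t)) x) ^ 2))
    (hratio_int : ∀ t, 0 ≤ t →
      Integrable (fun x => (p x t / q x t) * deriv (fun s => q x s) t))
    -- differentiation under the integral sign is valid
    (hDUI : ∀ t, 0 ≤ t →
      HasDerivAt (fun s => ∫ x, p x s * Real.log (p x s / q x s))
        (∫ x, deriv (fun s => p x s * Real.log (p x s / q x s)) t) t)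
    -- integration by parts incurs no boundary terms
    (hbd₁ : ∀ t, 0 ≤ t →
      Tendsto (fun x => a x t * p x t * Real.log (p x t / q x t)) atTop (nhds 0)
      ∧ Tendsto (fun x => a x t * p x t * Real.log (p x t / q x t)) atBot (nhds 0))
    (hbd₂ : ∀ t, 0 ≤ t →
      Tendsto (fun x => deriv (fun y => b y t * p y t) x * Real.log (p x t / q x t))
        atTop (nhds 0)
      ∧ Tendsto (fun x => deriv (fun y => b y t * p y t) x * Real.log (p x t / q x t))
        atBot (nhds 0))
    (hbd₃ : ∀ t, 0 ≤ t →
      Tendsto (fun x => b x t * p x t * deriv (fun y => Real.log (p y t / q y t)) x)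
        atTop (nhds 0)
      ∧ Tendsto (fun x => b x t * p x t * deriv (fun y => Real.log (p y t / q y t)) x)
        atBot (nhds 0))
    (hbd₄ : ∀ t, 0 ≤ t →
      Tendsto (fun x => b x t * q x t * deriv (fun y => p y t / q y t) x) atTop (nhds 0)
      ∧ Tendsto (fun x => b x t * q x t * deriv (fun y => p y t / q y t) x) atBot (nhds 0))
    (hbd₅ : ∀ t, 0 ≤ t →
      Tendsto (fun x => deriv (fun y => b y t * q y t) x * (p x t / q x t)) atTop (nhds 0)
      ∧ Tendsto (fun x => deriv (fun y => b y t * q y t) x * (p x t / q x t)) atBot (nhds 0))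
    (hbd₆ : ∀ t, 0 ≤ t →
      Tendsto (fun x => a x t * q x t * (p x t / q x t)) atTop (nhds 0)
      ∧ Tendsto (fun x => a x t * q x t * (p x t / q x t)) atBot (nhds 0)) :
    ∀ t, 0 ≤ t →
      HasDerivAt (fun s => ∫ x, p x s * Real.log (p x s / q x s))
        (-(1 / 2) * ∫ x, p x t * b x t *
          (deriv (fun y => Real.log (p y t / q y t)) x) ^ 2) t
      ∧ -(1 / 2) * (∫ x, p x t * b x t *
          (deriv (fun y => Real.log (p y t / q y t)) x) ^ 2) ≤ 0 := by
  intro t ht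
  -- x-slice smoothness
  have hF : ContDiff ℝ (⊤ : ℕ∞) (fun x => p x t) := hp_smooth.comp (contDiff_id.prodMk contDiff_const)
  have hG : ContDiff ℝ (⊤ : ℕ∞) (fun x => q x t) := hq_smooth.comp (contDiff_id.prodMk contDiff_const)
  have hA : ContDiff ℝ (⊤ : ℕ∞) (fun x => a x t) := ha_smooth.comp (contDiff_id.prodMk contDiff_const)
  have hB : ContDiff ℝ (⊤ : ℕ∞) (fun x => b x t) := hb_smooth.comp (contDiff_id.prodMk contDiff_const)
  have hFpos : ∀ x, 0 < p x t := fun x => hp_pos x t ht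
  have hGpos : ∀ x, 0 < q x t := fun x => hq_pos x t ht
  have hFd : ∀ x, HasDerivAt (fun y => p y t) (deriv (fun y => p y t) x) x :=
    fun x => (hF.differentiable (by simp) x).hasDerivAt
  have hGd : ∀ x, HasDerivAt (fun y => q y t) (deriv (fun y => q y t) x) x :=
    fun x => (hG.differentiable (by simp) x).hasDerivAt
  -- derivative of the ratio and its log
  have hrx : ∀ x, HasDerivAt (fun y => p y t / q y t)
      ((deriv (fun y => p y t) x * q x t - p x t * deriv (fun y => q y t) x) / (q x t) ^ 2) x :=
    fun x => (hFd x).div (hGd x) (hGpos x).ne'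
  have hlogx : ∀ x, HasDerivAt (fun y => Real.log (p y t / q y t))
      (deriv (fun y => p y t) x / p x t - deriv (fun y => q y t) x / q x t) x := by
    intro x
    have h := (hrx x).log (div_pos (hFpos x) (hGpos x)).ne'
    convert h using 1
    have h1 := (hFpos x).ne'
    have h2 := (hGpos x).ne'
    field_simp
  have h'val : ∀ x, deriv (fun y => Real.log (p y t / q y t)) x
      = deriv (fun y => p y t) x / p x t - deriv (fun y => q y t) x / q x t :=
    fun x => (hlogx x).deriv
  have r'val : ∀ x, deriv (fun y => p y t / q y t) x
      = (deriv (fun y => p y t) x * q x t - p x t * deriv (fun y => q y t) x) / (q x t) ^ 2 :=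
    fun x => (hrx x).deriv
  -- product-rule expansion of deriv (b·p) and deriv (b·q)
  have hdBFval : ∀ x, deriv (fun y => b y t * p y t) x
      = deriv (fun y => b y t) x * p x t + b x t * deriv (fun y => p y t) x :=
    fun x => deriv_mul (hB.differentiable (by simp) x) (hF.differentiable (by simp) x)
  have hdBGval : ∀ x, deriv (fun y => b y t * q y t) x
      = deriv (fun y => b y t) x * q x t + b x t * deriv (fun y => q y t) x :=
    fun x => deriv_mul (hB.differentiable (by simp) x) (hG.differentiable (by simp) x)
  -- u and v have spatial derivatives equal to the time derivatives (Fokker-Planck)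
  have hdBF : Differentiable ℝ (deriv (fun y => b y t * p y t)) :=
    ((contDiff_infty_iff_deriv.mp ((hB.mul hF).of_le (by simp))).2).differentiable (by simp)
  have hdBG : Differentiable ℝ (deriv (fun y => b y t * q y t)) :=
    ((contDiff_infty_iff_deriv.mp ((hB.mul hG).of_le (by simp))).2).differentiable (by simp)
  have hu : ∀ x, HasDerivAt
      (fun y => -(a y t * p y t) + 1 / 2 * deriv (fun z => b z t * p z t) y)
      (deriv (fun s => p x s) t) x := by
    intro x
    have h1 : HasDerivAt (fun y => a y t * p y t) (deriv (fun y => a y t * p y t) x) x :=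
      (((hA.mul hF).differentiable (by simp)) x).hasDerivAt
    have h2 : HasDerivAt (deriv (fun y => b y t * p y t))
        (deriv (fun y => deriv (fun z => b z t * p z t) y) x) x := (hdBF x).hasDerivAt
    have h3 := h1.neg.add (h2.const_mul (1 / 2 : ℝ))
    rw [hFPp x t ht]
    exact h3
  have hv : ∀ x, HasDerivAt
      (fun y => -(a y t * q y t) + 1 / 2 * deriv (fun z => b z t * q z t) y)
      (deriv (fun s => q x s) t) x := by
    intro x
    have h1 : HasDerivAt (fun y => a y t * q y t) (deriv (fun y => a y t * q y t) x) x :=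
      (((hA.mul hG).differentiable (by simp)) x).hasDerivAt
    have h2 : HasDerivAt (deriv (fun y => b y t * q y t))
        (deriv (fun y => deriv (fun z => b z t * q z t) y) x) x := (hdBG x).hasDerivAt
    have h3 := h1.neg.add (h2.const_mul (1 / 2 : ℝ))
    rw [hFPq x t ht]
    exact h3
  -- the time derivative of the KL integrand
  have hD : ∀ x, deriv (fun s => p x s * Real.log (p x s / q x s)) t
      = deriv (fun s => p x s) t * (Real.log (p x t / q x t) + 1)
        - (p x t / q x t) * deriv (fun s => q x s) t := by
    intro x
    have hPt : ContDiff ℝ (⊤ : ℕ∞) (fun s => p x s) := hp_smooth.comp (contDiff_const.prodMk contDiff_id)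
    have hQt : ContDiff ℝ (⊤ : ℕ∞) (fun s => q x s) := hq_smooth.comp (contDiff_const.prodMk contDiff_id)
    have hP : HasDerivAt (fun s => p x s) (deriv (fun s => p x s) t) t :=
      ((hPt.differentiable (by simp)) t).hasDerivAt
    have hQ : HasDerivAt (fun s => q x s) (deriv (fun s => q x s) t) t :=
      ((hQt.differentiable (by simp)) t).hasDerivAt
    have hPp := hFpos x
    have hQp := hGpos x
    have hdiv : HasDerivAt (fun s => p x s / q x s)
        ((deriv (fun s => p x s) t * q x t - p x t * deriv (fun s => q x s) t) / (q x t) ^ 2) t :=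
      hP.div hQ hQp.ne'
    have hlog : HasDerivAt (fun s => Real.log (p x s / q x s))
        (((deriv (fun s => p x s) t * q x t - p x t * deriv (fun s => q x s) t) / (q x t) ^ 2)
          / (p x t / q x t)) t := hdiv.log (div_pos hPp hQp).ne'
    have hmul : HasDerivAt (fun s => p x s * Real.log (p x s / q x s)) _ t := hP.mul hlog
    rw [hmul.deriv]
    have h1 := hPp.ne'
    have h2 := hQp.ne'
    field_simp
    ring
  -- the auxiliary function W and its derivative
  set W : ℝ → ℝ := fun y =>
      (-(a y t * p y t) + 1 / 2 * deriv (fun z => b z t * p z t) y)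
        * (Real.log (p y t / q y t) + 1)
      - (-(a y t * q y t) + 1 / 2 * deriv (fun z => b z t * q z t) y) * (p y t / q y t)
    with hWdef
  set Φ : ℝ → ℝ := fun x =>
      deriv (fun s => p x s * Real.log (p x s / q x s)) t
      + 1 / 2 * (p x t * b x t * (deriv (fun y => Real.log (p y t / q y t)) x) ^ 2)
    with hΦdef
  have hWd : ∀ x, HasDerivAt W (Φ x) x := by
    intro x
    have h1 := (hu x).mul ((hlogx x).add_const 1)
    have h2 := (hv x).mul (hrx x)
    have h3 := h1.sub h2
    simp only [hWdef, hΦdef]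
    refine h3.congr_deriv ?_
    rw [hD x, h'val x, hdBFval x, hdBGval x]
    have hg := (hGpos x).ne'
    have hf := (hFpos x).ne'
    field_simp
    ring
  -- W vanishes at infinity
  have hWval : ∀ x, W x = -(a x t * p x t * Real.log (p x t / q x t))
      + 1 / 2 * (deriv (fun y => b y t * p y t) x * Real.log (p x t / q x t))
      + 1 / 2 * (b x t * q x t * deriv (fun y => p y t / q y t) x) := by
    intro x
    simp only [hWdef]
    rw [hdBFval x, hdBGval x, r'val x]
    have hg := (hGpos x).ne'
    have hf := (hFpos x).ne'
    field_simp
    ring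
  have hWtop : Tendsto W atTop (nhds 0) := by
    have hlim := (((hbd₁ t ht).1.neg.add ((hbd₂ t ht).1.const_mul (1 / 2 : ℝ))).add
      ((hbd₄ t ht).1.const_mul (1 / 2 : ℝ)))
    simp only [neg_zero, mul_zero, add_zero] at hlim
    exact hlim.congr fun x => (hWval x).symm
  have hWbot : Tendsto W atBot (nhds 0) := by
    have hlim := (((hbd₁ t ht).2.neg.add ((hbd₂ t ht).2.const_mul (1 / 2 : ℝ))).add
      ((hbd₄ t ht).2.const_mul (1 / 2 : ℝ)))
    simp only [neg_zero, mul_zero, add_zero] at hlim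
    exact hlim.congr fun x => (hWval x).symm
  -- integrability of Φ and the fundamental theorem of calculus on ℝ
  have hI1 := hKL_t_int t ht
  have hI2 := (hJrel_int t ht).const_mul (1 / 2 : ℝ)
  have hΦint : Integrable Φ := by
    rw [hΦdef]
    exact hI1.add hI2
  have hzero : ∫ x, Φ x = 0 := by
    have h1 : ∫ x in Set.Iic (0 : ℝ), Φ x = W 0 - 0 :=
      integral_Iic_of_hasDerivAt_of_tendsto' (fun x _ => hWd x) hΦint.integrableOn hWbot
    have h2 : ∫ x in Set.Ioi (0 : ℝ), Φ x = 0 - W 0 :=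
      integral_Ioi_of_hasDerivAt_of_tendsto' (fun x _ => hWd x) hΦint.integrableOn hWtop
    rw [← intervalIntegral.integral_Iic_add_Ioi (b := (0 : ℝ)) hΦint.integrableOn hΦint.integrableOn, h1, h2]
    ring
  rw [hΦdef] at hzero
  rw [integral_add hI1 hI2, integral_const_mul] at hzero
  have h12 : ∫ x, deriv (fun s => p x s * Real.log (p x s / q x s)) t
      = -(1 / 2) * ∫ x, p x t * b x t * (deriv (fun y => Real.log (p y t / q y t)) x) ^ 2 := by
    linarith
  constructor
  · have hd := hDUI t ht
    rw [h12] at hd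
    exact hd
  · have hnn : 0 ≤ ∫ x, p x t * b x t * (deriv (fun y => Real.log (p y t / q y t)) x) ^ 2 :=
      integral_nonneg fun x =>
        mul_nonneg (mul_nonneg (hFpos x).le (hb_pos x t ht).le) (sq_nonneg _)
    nlinarith
end

section
/- Let a, b : ℝ → ℝ be smooth with b > 0 (time-independent coefficients), and let p and q be smooth, strictly positive probability densities on ℝ, decaying rapidly at infinity together with their derivatives, that are both stationary solutions of the Fokker–Planck equation, i.e., −(a p)′ + (1/2)(b p)″ = 0 and −(a q)′ + (1/2)(b q)″ = 0 on ℝ. Assume the regularity conditions under which Theorem on KL decay applies (all integrals finite, integration by parts without boundary terms). Then p = q; i.e., the Fokker–Planck channel has at most one stationary probability density. -/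
open MeasureTheory Real Filter
open scoped ContDiff

/-- If `f` is a smooth stationary solution of the Fokker–Planck equation, then the flux
`(1/2)(b f)' - a f` is constant. -/
lemma fp_first_integral (a b f : ℝ → ℝ) (ha : ContDiff ℝ (⊤ : ℕ∞) a) (hb : ContDiff ℝ (⊤ : ℕ∞) b)
    (hf : ContDiff ℝ (⊤ : ℕ∞) f)
    (hstat : ∀ x, -(deriv (fun y => a y * f y) x)
      + (1 / 2) * deriv (fun y => deriv (fun z => b z * f z) y) x = 0) :
    ∀ x, (1/2) * deriv (fun z => b z * f z) x - a x * f x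
      = (1/2) * deriv (fun z => b z * f z) 0 - a 0 * f 0 := by
  have hbf : ContDiff ℝ (⊤ : ℕ∞) (fun z => b z * f z) := hb.mul hf
  have hdbf : ContDiff ℝ ∞ (deriv (fun z => b z * f z)) :=
    (contDiff_infty_iff_deriv.mp (hbf.of_le (by simp))).2
  have haf : Differentiable ℝ (fun z => a z * f z) :=
    (ha.differentiable (by simp)).mul (hf.differentiable (by simp))
  have hF : Differentiable ℝ (fun x => (1/2) * deriv (fun z => b z * f z) x - a x * f x) :=
    ((hdbf.differentiable (by norm_num)).const_mul _).sub haf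
  have hF' : ∀ x, deriv (fun x => (1/2) * deriv (fun z => b z * f z) x - a x * f x) x = 0 := by
    intro x
    rw [deriv_fun_sub (((hdbf.differentiable (by norm_num)) x).const_mul _) (haf x),
        deriv_const_mul _ ((hdbf.differentiable (by norm_num)) x)]
    have := hstat x
    linarith
  exact fun x => is_const_of_deriv_eq_zero hF hF' x 0


/-- **Uniqueness of the stationary density of a Fokker–Planck channel.**
If `p` and `q` are smooth, strictly positive, rapidly decreasing probability
densities that are both stationary solutions of the Fokker–Planck equation with
time-independent coefficients, i.e. `-(a p)' + (1/2)(b p)'' = 0` and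
`-(a q)' + (1/2)(b q)'' = 0`, then `p = q`. -/
theorem stationary_density_unique
    (a b : ℝ → ℝ)
    (ha_smooth : ContDiff ℝ (⊤ : ℕ∞) a) (hb_smooth : ContDiff ℝ (⊤ : ℕ∞) b)
    (hb_pos : ∀ x, 0 < b x)
    (p q : ℝ → ℝ)
    (hp_smooth : ContDiff ℝ (⊤ : ℕ∞) p) (hp_pos : ∀ x, 0 < p x)
    (hq_smooth : ContDiff ℝ (⊤ : ℕ∞) q) (hq_pos : ∀ x, 0 < q x)
    (hp_int : Integrable p) (hp_density : ∫ x, p x = 1)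
    (hq_int : Integrable q) (hq_density : ∫ x, q x = 1)
    -- `p` and `q` decay rapidly at infinity together with their derivatives
    (hp_decay_top : ∀ n m : ℕ, Tendsto (fun x => x ^ n * iteratedDeriv m p x) atTop (nhds 0))
    (hp_decay_bot : ∀ n m : ℕ, Tendsto (fun x => x ^ n * iteratedDeriv m p x) atBot (nhds 0))
    (hq_decay_top : ∀ n m : ℕ, Tendsto (fun x => x ^ n * iteratedDeriv m q x) atTop (nhds 0))
    (hq_decay_bot : ∀ n m : ℕ, Tendsto (fun x => x ^ n * iteratedDeriv m q x) atBot (nhds 0))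
    -- both are stationary solutions of the Fokker–Planck equation
    (hstat_p : ∀ x, -(deriv (fun y => a y * p y) x)
      + (1 / 2) * deriv (fun y => deriv (fun z => b z * p z) y) x = 0)
    (hstat_q : ∀ x, -(deriv (fun y => a y * q y) x)
      + (1 / 2) * deriv (fun y => deriv (fun z => b z * q z) y) x = 0)
    -- regularity under which the KL-decay theorem applies: finite integrals
    (hKL_int : Integrable (fun x => p x * Real.log (p x / q x)))
    (hJrel_int : Integrable (fun x =>
      p x * b x * (deriv (fun y => Real.log (p y / q y)) x) ^ 2))
    -- and integration by parts without boundary terms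
    (hbd₁ : Tendsto (fun x => a x * p x * Real.log (p x / q x)) atTop (nhds 0)
      ∧ Tendsto (fun x => a x * p x * Real.log (p x / q x)) atBot (nhds 0))
    (hbd₂ : Tendsto (fun x => deriv (fun y => b y * p y) x * Real.log (p x / q x))
        atTop (nhds 0)
      ∧ Tendsto (fun x => deriv (fun y => b y * p y) x * Real.log (p x / q x))
        atBot (nhds 0))
    (hbd₃ : Tendsto (fun x => b x * p x * deriv (fun y => Real.log (p y / q y)) x)
        atTop (nhds 0)
      ∧ Tendsto (fun x => b x * p x * deriv (fun y => Real.log (p y / q y)) x)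
        atBot (nhds 0))
    (hbd₄ : Tendsto (fun x => b x * q x * deriv (fun y => p y / q y) x) atTop (nhds 0)
      ∧ Tendsto (fun x => b x * q x * deriv (fun y => p y / q y) x) atBot (nhds 0))
    (hbd₅ : Tendsto (fun x => deriv (fun y => b y * q y) x * (p x / q x)) atTop (nhds 0)
      ∧ Tendsto (fun x => deriv (fun y => b y * q y) x * (p x / q x)) atBot (nhds 0))
    (hbd₆ : Tendsto (fun x => a x * p x) atTop (nhds 0)
      ∧ Tendsto (fun x => a x * p x) atBot (nhds 0)) :
    p = q := by
  have hq_ne : ∀ x, q x ≠ 0 := fun x => (hq_pos x).ne'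
  have hbq_pos : ∀ x, 0 < b x * q x := fun x => mul_pos (hb_pos x) (hq_pos x)
  have hbq_ne : ∀ x, b x * q x ≠ 0 := fun x => (hbq_pos x).ne'
  have hdp : Differentiable ℝ p := hp_smooth.differentiable (by simp)
  have hdq : Differentiable ℝ q := hq_smooth.differentiable (by simp)
  have hdb : Differentiable ℝ b := hb_smooth.differentiable (by simp)
  set h : ℝ → ℝ := fun y => p y / q y with hhdef
  have hh_smooth : ContDiff ℝ (⊤ : ℕ∞) h := hp_smooth.div hq_smooth hq_ne
  have hdh : Differentiable ℝ h := hh_smooth.differentiable (by simp)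
  -- the flux constants
  set Cp : ℝ := (1/2) * deriv (fun z => b z * p z) 0 - a 0 * p 0 with hCpdef
  set Cq : ℝ := (1/2) * deriv (fun z => b z * q z) 0 - a 0 * q 0 with hCqdef
  have hCp : ∀ x, (1/2) * deriv (fun z => b z * p z) x - a x * p x = Cp :=
    fp_first_integral a b p ha_smooth hb_smooth hp_smooth hstat_p
  have hCq : ∀ x, (1/2) * deriv (fun z => b z * q z) x - a x * q x = Cq :=
    fp_first_integral a b q ha_smooth hb_smooth hq_smooth hstat_q
  -- product rule: (bp)' = (bq)' h + bq h'
  have hBP_eq : (fun z => b z * p z) = fun z => (b z * q z) * h z := by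
    funext z
    rw [hhdef]
    field_simp [hq_ne z]
  have hderivBP : ∀ x, deriv (fun z => b z * p z) x
      = deriv (fun z => b z * q z) x * h x + (b x * q x) * deriv h x := by
    intro x
    rw [hBP_eq]
    exact deriv_mul ((hdb x).mul (hdq x)) (hdh x)
  set φ : ℝ → ℝ := fun x => b x * q x * deriv h x with hφdef
  -- key algebraic identity: φ = 2 Cp - 2 Cq h
  have hkey : ∀ x, φ x = 2*Cp - 2*Cq * h x := by
    intro x
    have h1 := hCp x
    have h2 := hCq x
    have h3 := hderivBP x
    have hap : a x * q x * h x = a x * p x := by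
      rw [hhdef]
      field_simp [hq_ne x]
    have hφx : φ x = b x * q x * deriv h x := rfl
    rw [hφx]
    linear_combination 2*h1 - h3 - 2*(h x)*h2 - 2*hap
  have hφfun : φ = fun x => 2*Cp - 2*Cq * h x := funext hkey
  have hφdiff : Differentiable ℝ φ := by
    rw [hφfun]
    exact (differentiable_const _).sub (hdh.const_mul _)
  have hφ' : ∀ x, deriv φ x = -(2*Cq * deriv h x) := by
    intro x
    rw [hφfun]
    exact (((hdh x).hasDerivAt.const_mul (2*Cq)).const_sub (2*Cp)).deriv
  have hderivh : ∀ x, deriv h x = φ x / (b x * q x) := by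
    intro x
    have hφx : φ x = b x * q x * deriv h x := rfl
    rw [hφx]
    exact (mul_div_cancel_left₀ _ (hbq_ne x)).symm
  set k : ℝ → ℝ := fun x => -(2*Cq) / (b x * q x) with hkdef
  have hk_cont : Continuous k :=
    continuous_const.div (hb_smooth.continuous.mul hq_smooth.continuous) hbq_ne
  set K : ℝ → ℝ := fun x => ∫ t in (0:ℝ)..x, k t with hKdef
  have hK : ∀ x, HasDerivAt K (k x) x := fun x =>
    (hk_cont.integral_hasStrictDerivAt 0 x).hasDerivAt
  have hK0 : K 0 = 0 := intervalIntegral.integral_same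
  have hφderiv : ∀ x, deriv φ x = k x * φ x := by
    intro x
    rw [hφ' x, hderivh x, hkdef]
    field_simp
  -- ψ = φ e^{-K} is constant
  have hψ' : ∀ x, HasDerivAt (fun y => φ y * Real.exp (-(K y))) 0 x := by
    intro x
    have h1 : HasDerivAt φ (k x * φ x) x := by
      rw [← hφderiv x]
      exact (hφdiff x).hasDerivAt
    have h2 : HasDerivAt (fun y => Real.exp (-(K y))) (Real.exp (-(K x)) * (-(k x))) x :=
      (hK x).neg.exp
    have h3 : HasDerivAt (fun y => φ y * Real.exp (-(K y))) _ x := h1.mul h2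
    convert h3 using 1
    ring
  have hψconst : ∀ x, φ x * Real.exp (-(K x)) = φ 0 := by
    intro x
    have := is_const_of_deriv_eq_zero (fun y => (hψ' y).differentiableAt)
      (fun y => (hψ' y).deriv) x 0
    simpa [hK0] using this
  have hrep : ∀ x, φ x = φ 0 * Real.exp (K x) := by
    intro x
    have h1 := hψconst x
    have h2 : Real.exp (-(K x)) * Real.exp (K x) = 1 := by
      rw [← Real.exp_add]; simp
    calc φ x = φ x * (Real.exp (-(K x)) * Real.exp (K x)) := by rw [h2, mul_one]
    _ = (φ x * Real.exp (-(K x))) * Real.exp (K x) := by ring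
    _ = φ 0 * Real.exp (K x) := by rw [h1]
  set s : ℝ := -(2*Cq) * φ 0 with hsdef
  have hφderiv2 : ∀ x, deriv φ x = s * (Real.exp (K x) / (b x * q x)) := by
    intro x
    rw [hφderiv x, hrep x, hkdef, hsdef]
    field_simp
  -- φ is monotone or antitone, tends to 0 at ±∞, hence vanishes
  have hzero : ∀ x, φ x = 0 := by
    rcases le_or_gt 0 s with hs | hs
    · have hmono : Monotone φ := monotone_of_deriv_nonneg hφdiff (fun x => by
        rw [hφderiv2 x]
        exact mul_nonneg hs (div_pos (Real.exp_pos _) (hbq_pos x)).le)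
      intro x
      exact le_antisymm (hmono.ge_of_tendsto hbd₄.1 x) (hmono.le_of_tendsto hbd₄.2 x)
    · have hanti : Antitone φ := antitone_of_deriv_nonpos hφdiff (fun x => by
        rw [hφderiv2 x]
        exact mul_nonpos_of_nonpos_of_nonneg hs.le
          (div_pos (Real.exp_pos _) (hbq_pos x)).le)
      intro x
      exact le_antisymm (hanti.ge_of_tendsto hbd₄.2 x) (hanti.le_of_tendsto hbd₄.1 x)
  have hh' : ∀ x, deriv h x = 0 := by
    intro x
    have h0 : b x * q x * deriv h x = 0 := hzero x
    exact (mul_eq_zero.mp h0).resolve_left (hbq_ne x)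
  have hconst : ∀ x, h x = h 0 := fun x => is_const_of_deriv_eq_zero hdh hh' x 0
  have hpq : ∀ x, p x = h 0 * q x := by
    intro x
    have hx : p x = h x * q x := (div_mul_cancel₀ _ (hq_ne x)).symm
    rw [hx, hconst x]
  have h01 : h 0 = 1 := by
    have hcalc : (1:ℝ) = h 0 := by
      calc (1:ℝ) = ∫ x, p x := hp_density.symm
      _ = ∫ x, h 0 * q x := by
          congr 1
          funext x
          exact hpq x
      _ = h 0 * ∫ x, q x := integral_const_mul _ _
      _ = h 0 := by rw [hq_density, mul_one]
    exact hcalc.symm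
  funext x
  rw [hpq x, h01, one_mul]
end
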